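/- arXiv:2603.29124 — 9 statements merged into one kernel-verified Lean document; each statement's English description precedes it below -/
import Mathlib

section
/- Let X be a real Hilbert space, t₀ > 0, g : [t₀,∞) → X continuously differentiable, η : [t₀,∞) → [0,∞) continuously differentiable, and C ≥ 0. If ‖g(t) + ∫_{t₀}^t η(s) g(s) ds‖ ≤ C for all t ≥ t₀, then sup_{t ≥ t₀} ‖g(t)‖ < +∞. -/
open Real Filter Asymptotics
open scoped RealInnerProductSpace Topology

theorem bounded_of_integral_perturbation_bounded
    {X : Type*} [NormedAddCommGroup X] [InnerProductSpace ℝ X] [CompleteSpace X]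
    (t₀ : ℝ) (ht₀ : 0 < t₀) (g : ℝ → X) (η : ℝ → ℝ) (C : ℝ)
    (hg : ContDiffOn ℝ 1 g (Set.Ici t₀))
    (hη : ContDiffOn ℝ 1 η (Set.Ici t₀))
    (hηnn : ∀ t ≥ t₀, 0 ≤ η t)
    (hC : 0 ≤ C)
    (hbound : ∀ t ≥ t₀, ‖g t + ∫ s in t₀..t, η s • g s‖ ≤ C) :
    ∃ B : ℝ, ∀ t ≥ t₀, ‖g t‖ ≤ B := by
  set f : ℝ → X := fun s => η s • g s with hf
  have hfc : ContinuousOn f (Set.Ici t₀) := hη.continuousOn.smul hg.continuousOn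
  set h : ℝ → X := fun t => ∫ s in t₀..t, f s with hh
  -- interval integrability
  have hint : ∀ b ≥ t₀, IntervalIntegrable f MeasureTheory.volume t₀ b := by
    intro b hb
    apply ContinuousOn.intervalIntegrable
    refine hfc.mono ?_
    rw [Set.uIcc_of_le hb]
    exact fun x hx => hx.1
  -- right derivative of h
  have hderiv : ∀ x ≥ t₀, HasDerivWithinAt h (f x) (Set.Ici x) x := by
    intro x hx
    have hsub : Set.Ioi x ⊆ Set.Ici t₀ := fun y hy => le_trans hx (le_of_lt hy)
    have hmeas : StronglyMeasurableAtFilter f (𝓝[Set.Ioi x] x) MeasureTheory.volume :=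
      (hfc.mono hsub).stronglyMeasurableAtFilter_nhdsWithin measurableSet_Ioi x
    exact intervalIntegral.integral_hasDerivWithinAt_right (hint x hx) hmeas
      ((hfc x hx).mono hsub)
  -- continuity of h on [t₀, b]
  have hcont : ∀ b ≥ t₀, ContinuousOn h (Set.Icc t₀ b) := by
    intro b hb
    have := intervalIntegral.continuousOn_primitive_interval
      (μ := MeasureTheory.volume) (f := f) (a := t₀) (b := b) ?_
    · rwa [Set.uIcc_of_le hb] at this
    · rw [Set.uIcc_of_le hb]
      exact (hfc.mono (fun x hx => hx.1)).integrableOn_compact isCompact_Icc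
  -- key claim: ⟪h t, h t⟫ ≤ C^2 for all t ≥ t₀
  have hkey : ∀ b ≥ t₀, ⟪h b, h b⟫ ≤ C ^ 2 := by
    intro b hb
    have hb1 : (0:ℝ) < b - t₀ + 1 := by linarith
    have Hε : ∀ ε > 0, ⟪h b, h b⟫ ≤ C ^ 2 + ε * (b - t₀ + 1) := by
      intro ε hε
      have := image_le_of_deriv_right_lt_deriv_boundary
        (f := fun t => ⟪h t, h t⟫) (f' := fun x => 2 * (η x * ⟪g x, h x⟫))
        (a := t₀) (b := b)
        (B := fun t => C ^ 2 + ε * (t - t₀ + 1)) (B' := fun _ => ε)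
        ?_ ?_ ?_ ?_ ?_ (Set.right_mem_Icc.2 hb)
      · simpa using this
      · -- continuity of φ
        exact ((hcont b hb).inner (hcont b hb))
      · -- derivative of φ
        intro x hx
        have hd := (hderiv x hx.1).inner ℝ (hderiv x hx.1)
        refine hd.congr_deriv ?_
        rw [hf]
        rw [real_inner_smul_left, real_inner_smul_right, real_inner_comm]
        ring
      · -- initial condition
        simp [hh, intervalIntegral.integral_same]
        positivity
      · -- derivative of B
        intro x
        have : HasDerivAt (fun t => C ^ 2 + ε * (t - t₀ + 1)) (ε * 1) x := by
          exact (((hasDerivAt_id x).sub_const t₀).add_const 1).const_mul ε |>.const_add (C ^ 2)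
        simpa using this
      · -- the barrier condition
        intro x hx hEq
        have hxt : t₀ ≤ x := hx.1
        have hEq2 : ⟪h x, h x⟫ = C ^ 2 + ε * (x - t₀ + 1) := hEq
        have hC2 : C ^ 2 < ⟪h x, h x⟫ := by nlinarith
        have hnorm : ⟪h x, h x⟫ = ‖h x‖ ^ 2 := real_inner_self_eq_norm_sq (h x)
        have hChx : C < ‖h x‖ := by
          nlinarith [norm_nonneg (h x), hnorm ▸ hC2]
        have hgb : ‖g x + h x‖ ≤ C := hbound x hxt
        have hinner : ⟪g x, h x⟫ = ⟪g x + h x, h x⟫ - ‖h x‖ ^ 2 := by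
          rw [inner_add_left, real_inner_self_eq_norm_sq]; ring
        have habs : ⟪g x + h x, h x⟫ ≤ C * ‖h x‖ := by
          calc ⟪g x + h x, h x⟫ ≤ ‖g x + h x‖ * ‖h x‖ := real_inner_le_norm _ _
            _ ≤ C * ‖h x‖ := by
                apply mul_le_mul_of_nonneg_right hgb (norm_nonneg _)
        have hneg : ⟪g x, h x⟫ ≤ 0 := by
          rw [hinner]
          nlinarith
        show 2 * (η x * ⟪g x, h x⟫) < ε
        have := hηnn x hxt
        nlinarith
    -- pass to the limit ε → 0
    by_contra hcon
    push_neg at hcon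
    set ε := (⟪h b, h b⟫ - C ^ 2) / (2 * (b - t₀ + 1)) with hεdef
    have hεpos : 0 < ε := div_pos (by linarith) (by linarith)
    have hεmul : ε * (b - t₀ + 1) = (⟪h b, h b⟫ - C ^ 2) / 2 := by
      rw [hεdef]; field_simp
    have := Hε ε hεpos
    rw [hεmul] at this
    linarith
  -- conclude
  refine ⟨2 * C, fun t ht => ?_⟩
  have hhb : ‖h t‖ ≤ C := by
    have := hkey t ht
    rw [real_inner_self_eq_norm_sq] at this
    nlinarith [norm_nonneg (h t)]
  calc ‖g t‖ = ‖(g t + h t) - h t‖ := by rw [add_sub_cancel_right]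
    _ ≤ ‖g t + h t‖ + ‖h t‖ := norm_sub_le _ _
    _ ≤ C + C := add_le_add (hbound t ht) hhb
    _ = 2 * C := by ring
end

section
/- Let (x̄*, λ̄*) be the projection of the origin onto Ω and let (x_t, λ_t) be the unique saddle point of L_t for each t ≥ t₀. If 0 < p < 1, then lim_{t→+∞} ‖(x_t,λ_t) − (x̄*,λ̄*)‖ = 0 and ‖(x_t,λ_t)‖ ≤ ‖(x̄*,λ̄*)‖ for all t ≥ t₀. -/
open Real Filter Asymptotics
open scoped RealInnerProductSpace Topology

lemma my_subgrad {X : Type*} [NormedAddCommGroup X] [InnerProductSpace ℝ X] [CompleteSpace X]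
    {f : X → ℝ} {f' : X → X} (hf : ∀ u, HasGradientAt f (f' u) u)
    (hconv : ConvexOn ℝ Set.univ f) (x y : X) :
    f x + ⟪f' x, y - x⟫ ≤ f y := by
  set g : ℝ → ℝ := fun s => f (x + s • (y - x)) with hg
  have hgc : ConvexOn ℝ Set.univ g := by
    have haff : ConvexOn ℝ ((fun s : ℝ => x + s • (y - x)) ⁻¹' Set.univ)
        (f ∘ (fun s : ℝ => x + s • (y - x))) := by
      have : (fun s : ℝ => x + s • (y - x)) = fun s : ℝ =>
          (AffineMap.lineMap x y) s := by
        funext s; simp [AffineMap.lineMap_apply]; abel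
      rw [this]
      exact hconv.comp_affineMap _
    exact (by simpa using haff : ConvexOn ℝ Set.univ (f ∘ fun s : ℝ => x + s • (y - x)))
  have h2 : HasDerivAt (fun s : ℝ => x + s • (y - x)) (y - x) 0 := by
    simpa using ((hasDerivAt_id (0:ℝ)).smul_const (y - x)).const_add x
  have h1 : HasFDerivAt f (InnerProductSpace.toDual ℝ X (f' x)) (x + (0:ℝ) • (y - x)) := by
    simpa using (hf x).hasFDerivAt
  have hgd : HasDerivAt g ⟪f' x, y - x⟫ 0 := by
    have := h1.comp_hasDerivAt 0 h2
    exact (by simpa [InnerProductSpace.toDual_apply_apply] using this :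
      HasDerivAt (f ∘ fun s : ℝ => x + s • (y - x)) ⟪f' x, y - x⟫ 0)
  have key := hgc.le_slope_of_hasDerivAt (Set.mem_univ 0) (Set.mem_univ 1) zero_lt_one hgd
  rw [slope_def_field] at key
  simp only [hg] at key
  simp only [one_smul, zero_smul, add_zero, add_sub_cancel] at key
  linarith [key]

set_option maxHeartbeats 2000000 in
theorem saddle_curve_strong_convergence_and_norm_bound
    {X Y : Type*} [NormedAddCommGroup X] [InnerProductSpace ℝ X] [CompleteSpace X]
    [NormedAddCommGroup Y] [InnerProductSpace ℝ Y] [CompleteSpace Y]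
    (f : X → ℝ) (f' : X → X) (hf : ∀ u, HasGradientAt f (f' u) u)
    (hconv : ConvexOn ℝ Set.univ f)
    (A : X →L[ℝ] Y) (b : Y)
    (L : X → Y → ℝ) (hL : ∀ u lam, L u lam = f u + ⟪lam, A u - b⟫)
    (c p t₀ : ℝ) (hc : 0 < c) (hp0 : 0 < p) (hp1 : p < 1) (ht₀ : 0 < t₀)
    (Lt : ℝ → X → Y → ℝ)
    (hLt : ∀ t u lam, Lt t u lam = L u lam + (c / (2 * t ^ p)) * (‖u‖ ^ 2 - ‖lam‖ ^ 2))
    (gx : ℝ → X → Y → X)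
    (hgx : ∀ t u lam, gx t u lam = f' u + ContinuousLinearMap.adjoint A lam + (c / t ^ p) • u)
    (gl : ℝ → X → Y → Y)
    (hgl : ∀ t u lam, gl t u lam = A u - b - (c / t ^ p) • lam)
    (Om : Set (X × Y))
    (hOm : Om = {z : X × Y | ∀ u μ, L z.1 μ ≤ L z.1 z.2 ∧ L z.1 z.2 ≤ L u z.2})
    (hOmne : Om.Nonempty)
    (xs : X) (ls : Y)
    (hmem : (xs, ls) ∈ Om)
    (hmin : ∀ w ∈ Om, Real.sqrt (‖xs‖ ^ 2 + ‖ls‖ ^ 2) ≤ Real.sqrt (‖w.1‖ ^ 2 + ‖w.2‖ ^ 2))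
    (xt : ℝ → X) (lt : ℝ → Y)
    (hsaddle : ∀ t ≥ t₀, gx t (xt t) (lt t) = 0 ∧ gl t (xt t) (lt t) = 0)
    :
    Tendsto (fun t => Real.sqrt (‖xt t - xs‖ ^ 2 + ‖lt t - ls‖ ^ 2)) atTop (nhds 0)
    ∧ ∀ t ≥ t₀, Real.sqrt (‖xt t‖ ^ 2 + ‖lt t‖ ^ 2) ≤ Real.sqrt (‖xs‖ ^ 2 + ‖ls‖ ^ 2) := by
  classical
  obtain ⟨e, heq⟩ : ∃ E : ℝ → ℝ, E = fun t => c / t ^ p := ⟨_, rfl⟩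
  have htpos : ∀ t : ℝ, t₀ ≤ t → (0:ℝ) < t := fun t ht => lt_of_lt_of_le ht₀ ht
  have he_pos : ∀ t, t₀ ≤ t → 0 < e t := by
    intro t ht; rw [heq]
    exact div_pos hc (Real.rpow_pos_of_pos (htpos t ht) p)
  have he_lt : ∀ s t, t₀ ≤ s → s < t → e t < e s := by
    intro s t hs hst; rw [heq]
    exact div_lt_div_of_pos_left hc (Real.rpow_pos_of_pos (htpos s hs) p)
      (Real.rpow_lt_rpow (le_of_lt (htpos s hs)) hst hp0)
  have he0 : Tendsto e atTop (𝓝 0) := by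
    rw [heq]
    exact Tendsto.div_atTop tendsto_const_nhds (tendsto_rpow_atTop hp0)
  -- saddle equations
  have E2 : ∀ t, t₀ ≤ t → A (xt t) - b = e t • lt t := by
    intro t ht
    have h := (hsaddle t ht).2
    rw [hgl] at h
    rw [heq]
    exact sub_eq_zero.mp h
  have E1 : ∀ t, t₀ ≤ t → ∀ v : X,
      ⟪f' (xt t), v⟫ = -(e t * ⟪xt t, v⟫) - ⟪lt t, A v⟫ := by
    intro t ht v
    have h := (hsaddle t ht).1
    rw [hgx, show c / t ^ p = e t by rw [heq]] at h
    have hfe : f' (xt t) = -(e t • xt t) - ContinuousLinearMap.adjoint A (lt t) := by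
      have h' : f' (xt t) + ContinuousLinearMap.adjoint A (lt t) = -(e t • xt t) :=
        eq_neg_of_add_eq_zero_left h
      rw [eq_sub_iff_add_eq]
      exact h'
    rw [hfe]
    rw [inner_sub_left, inner_neg_left, real_inner_smul_left]
    rw [ContinuousLinearMap.adjoint_inner_left]
  -- A xs = b
  have hAxs : A xs = b := by
    rw [hOm] at hmem
    have h := (hmem xs (ls + (A xs - b))).1
    rw [hL, hL] at h
    simp only [inner_add_left] at h
    have h2 : ⟪A xs - b, A xs - b⟫ ≤ 0 := by linarith
    have h3 : A xs - b = 0 := by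
      have := real_inner_self_nonneg (x := A xs - b)
      have h4 : ⟪A xs - b, A xs - b⟫ = 0 := le_antisymm h2 this
      exact inner_self_eq_zero.mp h4
    exact sub_eq_zero.mp h3
  have hII : ∀ u : X, f xs ≤ f u + ⟪ls, A u - b⟫ := by
    intro u
    rw [hOm] at hmem
    have h := (hmem u ls).2
    rw [hL, hL] at h
    simp only [hAxs, sub_self, inner_zero_right, add_zero] at h
    exact h
  -- key1
  have key1 : ∀ t, t₀ ≤ t →
      ‖xt t‖ ^ 2 + ‖lt t‖ ^ 2 ≤ ⟪xt t, xs⟫ + ⟪lt t, ls⟫ := by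
    intro t ht
    have hI := my_subgrad hf hconv (xt t) xs
    have hII' := hII (xt t)
    have hcomb : ⟪f' (xt t), xs - xt t⟫ ≤ ⟪ls, A (xt t) - b⟫ := by linarith
    have hAv : A (xs - xt t) = -(e t • lt t) := by
      rw [map_sub, hAxs, ← E2 t ht]; abel
    have hexp : ⟪f' (xt t), xs - xt t⟫
        = -(e t * ⟪xt t, xs - xt t⟫) + e t * ⟪lt t, lt t⟫ := by
      rw [E1 t ht, hAv, inner_neg_right, real_inner_smul_right]; ring
    have hrhs : ⟪ls, A (xt t) - b⟫ = e t * ⟪ls, lt t⟫ := by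
      rw [E2 t ht, real_inner_smul_right]
    rw [hexp, hrhs] at hcomb
    have hdiv : -⟪xt t, xs - xt t⟫ + ⟪lt t, lt t⟫ ≤ ⟪ls, lt t⟫ := by
      have hpos := he_pos t ht
      nlinarith [hcomb]
    rw [inner_sub_right] at hdiv
    rw [real_inner_self_eq_norm_sq, real_inner_self_eq_norm_sq] at *
    have h1 : ⟪ls, lt t⟫ = ⟪lt t, ls⟫ := real_inner_comm _ _
    nlinarith [hdiv]
  -- key2 : monotone-type inequality between two parameters
  have key2 : ∀ s t, t₀ ≤ s → t₀ ≤ t →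
      e t * (‖xt t‖ ^ 2 + ‖lt t‖ ^ 2) + e s * (‖xt s‖ ^ 2 + ‖lt s‖ ^ 2)
        ≤ (e t + e s) * (⟪xt t, xt s⟫ + ⟪lt t, lt s⟫) := by
    intro s t hs ht
    have hI1 := my_subgrad hf hconv (xt t) (xt s)
    have hI2 := my_subgrad hf hconv (xt s) (xt t)
    have hsum : ⟪f' (xt t), xt s - xt t⟫ + ⟪f' (xt s), xt t - xt s⟫ ≤ 0 := by linarith
    have hAv1 : A (xt s - xt t) = e s • lt s - e t • lt t := by
      rw [map_sub, ← sub_sub_sub_cancel_right (A (xt s)) (A (xt t)) b, E2 s hs, E2 t ht]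
    have hAv2 : A (xt t - xt s) = e t • lt t - e s • lt s := by
      rw [map_sub, ← sub_sub_sub_cancel_right (A (xt t)) (A (xt s)) b, E2 s hs, E2 t ht]
    rw [E1 t ht, E1 s hs, hAv1, hAv2] at hsum
    simp only [inner_sub_right, real_inner_smul_right, inner_sub_left,
      real_inner_smul_left] at hsum ⊢
    rw [real_inner_self_eq_norm_sq, real_inner_self_eq_norm_sq,
      real_inner_self_eq_norm_sq, real_inner_self_eq_norm_sq] at *
    rw [real_inner_comm (xt s) (xt t), real_inner_comm (lt s) (lt t)] at hsum ⊢
    nlinarith [hsum]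
  have hKM : ∀ t, t₀ ≤ t → ‖xt t‖ ^ 2 + ‖lt t‖ ^ 2 ≤ ‖xs‖ ^ 2 + ‖ls‖ ^ 2 := by
    intro t ht
    have h1 := key1 t ht
    have c1 : ⟪xt t, xs⟫ ≤ ‖xt t‖ * ‖xs‖ := real_inner_le_norm _ _
    have c2 : ⟪lt t, ls⟫ ≤ ‖lt t‖ * ‖ls‖ := real_inner_le_norm _ _
    have hS : ‖xt t‖ ^ 2 + ‖lt t‖ ^ 2 ≤ ‖xt t‖ * ‖xs‖ + ‖lt t‖ * ‖ls‖ := by linarith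
    have hS2 : (‖xt t‖ * ‖xs‖ + ‖lt t‖ * ‖ls‖) ^ 2
        ≤ (‖xt t‖ ^ 2 + ‖lt t‖ ^ 2) * (‖xs‖ ^ 2 + ‖ls‖ ^ 2) := by
      nlinarith [sq_nonneg (‖xt t‖ * ‖ls‖ - ‖lt t‖ * ‖xs‖)]
    have hKnn : (0:ℝ) ≤ ‖xt t‖ ^ 2 + ‖lt t‖ ^ 2 := by positivity
    rcases eq_or_lt_of_le hKnn with h0 | h0
    · have : (0:ℝ) ≤ ‖xs‖ ^ 2 + ‖ls‖ ^ 2 := by positivity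
      linarith
    · have hsq : (‖xt t‖ ^ 2 + ‖lt t‖ ^ 2) ^ 2 ≤ (‖xt t‖ * ‖xs‖ + ‖lt t‖ * ‖ls‖) ^ 2 := by
        have hSnn : (0:ℝ) ≤ ‖xt t‖ * ‖xs‖ + ‖lt t‖ * ‖ls‖ := le_trans hKnn hS
        nlinarith [hS]
      nlinarith [hsq, hS2, h0]
  -- monotonicity of K and the Cauchy-type estimate
  have keymon : ∀ s t, t₀ ≤ s → s ≤ t →
      (‖xt s‖ ^ 2 + ‖lt s‖ ^ 2 ≤ ‖xt t‖ ^ 2 + ‖lt t‖ ^ 2) ∧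
      ‖xt t - xt s‖ ^ 2 + ‖lt t - lt s‖ ^ 2
        ≤ (‖xt t‖ ^ 2 + ‖lt t‖ ^ 2) - (‖xt s‖ ^ 2 + ‖lt s‖ ^ 2) := by
    intro s t hs hst
    rcases eq_or_lt_of_le hst with rfl | hlt'
    · simp
    · have ht : t₀ ≤ t := hs.trans hst
      have hk2 := key2 s t hs ht
      have ha := he_pos t ht
      have hb := he_lt s t hs hlt'
      have hDx : ‖xt t - xt s‖ ^ 2 = ‖xt t‖ ^ 2 - 2 * ⟪xt t, xt s⟫ + ‖xt s‖ ^ 2 :=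
        norm_sub_sq_real _ _
      have hDl : ‖lt t - lt s‖ ^ 2 = ‖lt t‖ ^ 2 - 2 * ⟪lt t, lt s⟫ + ‖lt s‖ ^ 2 :=
        norm_sub_sq_real _ _
      have hDnn : (0:ℝ) ≤ ‖xt t - xt s‖ ^ 2 + ‖lt t - lt s‖ ^ 2 := by positivity
      have hDsum : (e t + e s) * (‖xt t - xt s‖ ^ 2 + ‖lt t - lt s‖ ^ 2)
          ≤ (e s - e t) * ((‖xt t‖ ^ 2 + ‖lt t‖ ^ 2) - (‖xt s‖ ^ 2 + ‖lt s‖ ^ 2)) := by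
        rw [hDx, hDl]
        nlinarith [hk2]
      have habpos : (0:ℝ) < e t + e s := by linarith
      have hprod : (0:ℝ) ≤ (e t + e s) * (‖xt t - xt s‖ ^ 2 + ‖lt t - lt s‖ ^ 2) :=
        mul_nonneg habpos.le hDnn
      have hmono : ‖xt s‖ ^ 2 + ‖lt s‖ ^ 2 ≤ ‖xt t‖ ^ 2 + ‖lt t‖ ^ 2 := by
        have h1 : 0 ≤ (e s - e t) *
            ((‖xt t‖ ^ 2 + ‖lt t‖ ^ 2) - (‖xt s‖ ^ 2 + ‖lt s‖ ^ 2)) := le_trans hprod hDsum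
        have h2 : 0 < e s - e t := by linarith
        have h3 := (mul_nonneg_iff_of_pos_left h2).mp h1
        linarith
      refine ⟨hmono, ?_⟩
      have hstep : (e t + e s) * (‖xt t - xt s‖ ^ 2 + ‖lt t - lt s‖ ^ 2)
          ≤ (e t + e s) * ((‖xt t‖ ^ 2 + ‖lt t‖ ^ 2) - (‖xt s‖ ^ 2 + ‖lt s‖ ^ 2)) := by
        have h4 : (0:ℝ) ≤ (‖xt t‖ ^ 2 + ‖lt t‖ ^ 2) - (‖xt s‖ ^ 2 + ‖lt s‖ ^ 2) := by linarith
        have h5 : (0:ℝ) ≤ (2 * e t) *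
            ((‖xt t‖ ^ 2 + ‖lt t‖ ^ 2) - (‖xt s‖ ^ 2 + ‖lt s‖ ^ 2)) :=
          mul_nonneg (by linarith) h4
        nlinarith [hDsum, h5]
      exact le_of_mul_le_mul_left hstep habpos
  -- monotone bounded convergence of K along max-truncation
  have hK'mono : Monotone (fun r => ‖xt (max r t₀)‖ ^ 2 + ‖lt (max r t₀)‖ ^ 2) := by
    intro a b' hab
    exact (keymon _ _ (le_max_right _ _) (max_le_max hab le_rfl)).1
  have hK'bdd : BddAbove (Set.range (fun r => ‖xt (max r t₀)‖ ^ 2 + ‖lt (max r t₀)‖ ^ 2)) := by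
    refine ⟨‖xs‖ ^ 2 + ‖ls‖ ^ 2, ?_⟩
    rintro _ ⟨r, rfl⟩
    exact hKM _ (le_max_right _ _)
  have hKlim := tendsto_atTop_ciSup hK'mono hK'bdd
  set l0 : ℝ := ⨆ r, (‖xt (max r t₀)‖ ^ 2 + ‖lt (max r t₀)‖ ^ 2) with hl0
  have hK'le : ∀ r, ‖xt (max r t₀)‖ ^ 2 + ‖lt (max r t₀)‖ ^ 2 ≤ l0 :=
    fun r => le_ciSup hK'bdd r
  -- Cauchy property
  have hcauchy : CauchySeq (fun t => (xt t, lt t)) := by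
    rw [Metric.cauchySeq_iff]
    intro ε hε
    have hev : ∀ᶠ r in atTop, l0 - ε ^ 2 < ‖xt (max r t₀)‖ ^ 2 + ‖lt (max r t₀)‖ ^ 2 :=
      hKlim.eventually (eventually_gt_nhds (by nlinarith))
    obtain ⟨N0, hN0⟩ := eventually_atTop.mp hev
    have hmain : ∀ m n, max N0 t₀ ≤ n → n ≤ m →
        dist ((xt m, lt m)) ((xt n, lt n)) < ε := by
      intro m n hn hnm
      have hn₀ : t₀ ≤ n := le_trans (le_max_right _ _) hn
      have hm₀ : t₀ ≤ m := hn₀.trans hnm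
      have h2 := (keymon n m hn₀ hnm).2
      have hKm : ‖xt m‖ ^ 2 + ‖lt m‖ ^ 2 ≤ l0 := by
        have := hK'le m
        rwa [max_eq_left hm₀] at this
      have hKn : l0 - ε ^ 2 < ‖xt n‖ ^ 2 + ‖lt n‖ ^ 2 := by
        have := hN0 n (le_trans (le_max_left _ _) hn)
        rwa [max_eq_left hn₀] at this
      have hx2 : ‖xt m - xt n‖ ^ 2 + ‖lt m - lt n‖ ^ 2 < ε ^ 2 := by linarith
      rw [Prod.dist_eq]
      have hd1 : dist (xt m) (xt n) < ε := by
        rw [dist_eq_norm]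
        nlinarith [norm_nonneg (xt m - xt n), sq_nonneg (‖lt m - lt n‖)]
      have hd2 : dist (lt m) (lt n) < ε := by
        rw [dist_eq_norm]
        nlinarith [norm_nonneg (lt m - lt n), sq_nonneg (‖xt m - xt n‖)]
      exact max_lt hd1 hd2
    refine ⟨max N0 t₀, ?_⟩
    intro m hm n hn
    rcases le_total n m with h | h
    · exact hmain m n hn h
    · rw [dist_comm]; exact hmain n m hm h
  obtain ⟨z, hz⟩ := cauchySeq_tendsto_of_complete hcauchy
  have hx : Tendsto xt atTop (𝓝 z.1) := (continuous_fst.tendsto z).comp hz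
  have hlam : Tendsto lt atTop (𝓝 z.2) := (continuous_snd.tendsto z).comp hz
  -- identify the limit
  have hAcont : Tendsto (fun t => A (xt t) - b) atTop (𝓝 (A z.1 - b)) :=
    ((A.continuous.tendsto _).comp hx).sub tendsto_const_nhds
  have hAxb : A z.1 = b := by
    have h2 : Tendsto (fun t => e t • lt t) atTop (𝓝 ((0:ℝ) • z.2)) := he0.smul hlam
    have heq2 : (fun t => A (xt t) - b) =ᶠ[atTop] fun t => e t • lt t :=
      (eventually_ge_atTop t₀).mono (fun t ht => E2 t ht)
    have h3 := tendsto_nhds_unique (hAcont.congr' heq2) h2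
    have h4 : A z.1 - b = 0 := by simpa using h3
    exact sub_eq_zero.mp h4
  have hfz : Tendsto (fun t => f (xt t)) atTop (𝓝 (f z.1)) :=
    ((hf z.1).hasFDerivAt.differentiableAt.continuousAt.tendsto).comp hx
  have hsad2 : ∀ u, f z.1 ≤ f u + ⟪z.2, A u - b⟫ := by
    intro u
    have hev : ∀ᶠ t in atTop,
        f (xt t) + ⟪lt t, A (xt t) - b⟫ - ⟪lt t, A u - b⟫ - e t * ⟪xt t, u - xt t⟫ ≤ f u := by
      filter_upwards [eventually_ge_atTop t₀] with t ht
      have hI := my_subgrad hf hconv (xt t) u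
      have hE := E1 t ht (u - xt t)
      have hsplit : ⟪lt t, A (u - xt t)⟫ = ⟪lt t, A u - b⟫ - ⟪lt t, A (xt t) - b⟫ := by
        rw [map_sub, inner_sub_right, inner_sub_right, inner_sub_right]
        ring
      rw [hE, hsplit] at hI
      linarith
    have T2 : Tendsto (fun t => ⟪lt t, A (xt t) - b⟫) atTop (𝓝 ⟪z.2, A z.1 - b⟫) :=
      hlam.inner hAcont
    have T3 : Tendsto (fun t => ⟪lt t, A u - b⟫) atTop (𝓝 ⟪z.2, A u - b⟫) :=
      hlam.inner tendsto_const_nhds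
    have T4 : Tendsto (fun t => e t * ⟪xt t, u - xt t⟫) atTop (𝓝 (0 * ⟪z.1, u - z.1⟫)) :=
      he0.mul (hx.inner (tendsto_const_nhds.sub hx))
    have hle := le_of_tendsto_of_tendsto (((hfz.add T2).sub T3).sub T4)
      (tendsto_const_nhds : Tendsto (fun _ : ℝ => f u) atTop (𝓝 (f u))) hev
    rw [hAxb] at hle
    simp only [sub_self, inner_zero_right, zero_mul, add_zero, sub_zero] at hle
    linarith
  have hOmz : z ∈ Om := by
    rw [hOm]
    intro u μ
    constructor
    · have hz12 : L z.1 μ = L z.1 z.2 := by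
        rw [hL, hL, hAxb]
        simp
      exact le_of_eq hz12
    · rw [hL, hL, hAxb]
      simp only [sub_self, inner_zero_right, add_zero]
      exact hsad2 u
  have hK1lim : ‖z.1‖ ^ 2 + ‖z.2‖ ^ 2 ≤ ⟪z.1, xs⟫ + ⟪z.2, ls⟫ := by
    have hev : ∀ᶠ t in atTop,
        ‖xt t‖ ^ 2 + ‖lt t‖ ^ 2 ≤ ⟪xt t, xs⟫ + ⟪lt t, ls⟫ :=
      (eventually_ge_atTop t₀).mono key1
    exact le_of_tendsto_of_tendsto ((hx.norm.pow 2).add (hlam.norm.pow 2))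
      ((hx.inner tendsto_const_nhds).add (hlam.inner tendsto_const_nhds)) hev
  have hMle : ‖xs‖ ^ 2 + ‖ls‖ ^ 2 ≤ ‖z.1‖ ^ 2 + ‖z.2‖ ^ 2 := by
    have h := hmin z hOmz
    have hMnn : (0:ℝ) ≤ ‖xs‖ ^ 2 + ‖ls‖ ^ 2 := by positivity
    have hKnn : (0:ℝ) ≤ ‖z.1‖ ^ 2 + ‖z.2‖ ^ 2 := by positivity
    nlinarith [h, Real.sq_sqrt hMnn, Real.sq_sqrt hKnn,
      Real.sqrt_nonneg (‖xs‖ ^ 2 + ‖ls‖ ^ 2), Real.sqrt_nonneg (‖z.1‖ ^ 2 + ‖z.2‖ ^ 2)]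
  have hD : ‖z.1 - xs‖ ^ 2 + ‖z.2 - ls‖ ^ 2 ≤ 0 := by
    rw [norm_sub_sq_real, norm_sub_sq_real]
    linarith [hK1lim, hMle]
  have h1 : z.1 = xs := by
    have e1 : ‖z.1 - xs‖ ^ 2 = 0 :=
      le_antisymm (by nlinarith [sq_nonneg (‖z.2 - ls‖)]) (by positivity)
    have e2 : ‖z.1 - xs‖ = 0 := by
      have := (pow_eq_zero_iff (n := 2) (by norm_num)).mp e1
      exact this
    exact sub_eq_zero.mp (norm_eq_zero.mp e2)
  have h2 : z.2 = ls := by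
    have e1 : ‖z.2 - ls‖ ^ 2 = 0 :=
      le_antisymm (by nlinarith [sq_nonneg (‖z.1 - xs‖)]) (by positivity)
    have e2 : ‖z.2 - ls‖ = 0 := (pow_eq_zero_iff (n := 2) (by norm_num)).mp e1
    exact sub_eq_zero.mp (norm_eq_zero.mp e2)
  constructor
  · have hx' : Tendsto xt atTop (𝓝 xs) := h1 ▸ hx
    have hl' : Tendsto lt atTop (𝓝 ls) := h2 ▸ hlam
    have g1 : Tendsto (fun t => ‖xt t - xs‖ ^ 2) atTop (𝓝 0) := by
      have := ((hx'.sub (tendsto_const_nhds :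
        Tendsto (fun _ : ℝ => xs) atTop (𝓝 xs))).norm).pow 2
      simpa using this
    have g2 : Tendsto (fun t => ‖lt t - ls‖ ^ 2) atTop (𝓝 0) := by
      have := ((hl'.sub (tendsto_const_nhds :
        Tendsto (fun _ : ℝ => ls) atTop (𝓝 ls))).norm).pow 2
      simpa using this
    have hsum : Tendsto (fun t => ‖xt t - xs‖ ^ 2 + ‖lt t - ls‖ ^ 2) atTop (𝓝 0) := by
      simpa using g1.add g2
    have hfinal := (Real.continuous_sqrt.tendsto 0).comp hsum
    simpa [Function.comp_def, Real.sqrt_zero] using hfinal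
  · intro t ht
    exact Real.sqrt_le_sqrt (hKM t ht)
end

section
/- Let (x̄*, λ̄*) be the projection of the origin onto Ω, let (x_t, λ_t) be the unique saddle point of L_t for each t ≥ t₀, and assume the curve t ↦ (x_t, λ_t) is differentiable with derivative (ẋ_t, λ̇_t). If 0 < p < 1, then ‖(ẋ_t, λ̇_t)‖ ≤ (p/t)‖(x_t,λ_t)‖ ≤ (p/t)‖(x̄*,λ̄*)‖ for all t ≥ t₀. -/
open Real Filter Asymptotics
open scoped RealInnerProductSpace Topology

lemma grad_support_ineq {X : Type*} [NormedAddCommGroup X] [InnerProductSpace ℝ X] [CompleteSpace X]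
    {f : X → ℝ} {f' : X → X} (hf : ∀ u, HasGradientAt f (f' u) u)
    (hconv : ConvexOn ℝ Set.univ f) (x y : X) :
    ⟪f' x, y - x⟫ ≤ f y - f x := by
  set g : ℝ → ℝ := fun s => f (s • (y - x) + x) with hgdef
  have hgc : ConvexOn ℝ Set.univ g := by
    have h := hconv.comp_affineMap (AffineMap.lineMap x y)
    simpa [Function.comp_def, AffineMap.lineMap_apply, g] using h
  have hgd : HasDerivAt g ⟪f' x, y - x⟫ 0 := by
    have h1 : HasDerivAt (fun s : ℝ => s • (y - x) + x) (y - x) 0 := by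
      simpa using ((hasDerivAt_id (0:ℝ)).smul_const (y - x)).add_const x
    have h2 := ((hf ((0:ℝ) • (y - x) + x)).hasFDerivAt.comp_hasDerivAt 0 h1)
    simpa [InnerProductSpace.toDual_apply_apply, Function.comp_def, g] using h2
  have := hgc.le_slope_of_hasDerivAt (Set.mem_univ (0:ℝ)) (Set.mem_univ (1:ℝ)) one_pos hgd
  have hs : slope g 0 1 = f y - f x := by
    simp [slope_def_field, g]
  linarith [this.trans_eq hs]

lemma grad_mono {X : Type*} [NormedAddCommGroup X] [InnerProductSpace ℝ X] [CompleteSpace X]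
    {f : X → ℝ} {f' : X → X} (hf : ∀ u, HasGradientAt f (f' u) u)
    (hconv : ConvexOn ℝ Set.univ f) (x y : X) :
    0 ≤ ⟪f' x - f' y, x - y⟫ := by
  have h1 := grad_support_ineq hf hconv x y
  have h2 := grad_support_ineq hf hconv y x
  have e1 : ⟪f' x - f' y, x - y⟫ = -⟪f' x, y - x⟫ - ⟪f' y, x - y⟫ := by
    rw [inner_sub_left]
    rw [show x - y = -(y - x) by abel, inner_neg_right]
  rw [e1]
  linarith

set_option maxHeartbeats 1000000 in
theorem saddle_curve_derivative_bound
    {X Y : Type*} [NormedAddCommGroup X] [InnerProductSpace ℝ X] [CompleteSpace X]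
    [NormedAddCommGroup Y] [InnerProductSpace ℝ Y] [CompleteSpace Y]
    (f : X → ℝ) (f' : X → X) (hf : ∀ u, HasGradientAt f (f' u) u)
    (hconv : ConvexOn ℝ Set.univ f)
    (A : X →L[ℝ] Y) (b : Y)
    (L : X → Y → ℝ) (hL : ∀ u lam, L u lam = f u + ⟪lam, A u - b⟫)
    (c p t₀ : ℝ) (hc : 0 < c) (hp0 : 0 < p) (hp1 : p < 1) (ht₀ : 0 < t₀)
    (Lt : ℝ → X → Y → ℝ)
    (hLt : ∀ t u lam, Lt t u lam = L u lam + (c / (2 * t ^ p)) * (‖u‖ ^ 2 - ‖lam‖ ^ 2))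
    (gx : ℝ → X → Y → X)
    (hgx : ∀ t u lam, gx t u lam = f' u + ContinuousLinearMap.adjoint A lam + (c / t ^ p) • u)
    (gl : ℝ → X → Y → Y)
    (hgl : ∀ t u lam, gl t u lam = A u - b - (c / t ^ p) • lam)
    (Om : Set (X × Y))
    (hOm : Om = {z : X × Y | ∀ u μ, L z.1 μ ≤ L z.1 z.2 ∧ L z.1 z.2 ≤ L u z.2})
    (hOmne : Om.Nonempty)
    (xs : X) (ls : Y)
    (hmem : (xs, ls) ∈ Om)
    (hmin : ∀ w ∈ Om, Real.sqrt (‖xs‖ ^ 2 + ‖ls‖ ^ 2) ≤ Real.sqrt (‖w.1‖ ^ 2 + ‖w.2‖ ^ 2))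
    (xt : ℝ → X) (lt : ℝ → Y)
    (hsaddle : ∀ t ≥ t₀, gx t (xt t) (lt t) = 0 ∧ gl t (xt t) (lt t) = 0)
    (xt' : ℝ → X) (lt' : ℝ → Y)
    (hxt : ∀ t ≥ t₀, HasDerivAt xt (xt' t) t)
    (hlt : ∀ t ≥ t₀, HasDerivAt lt (lt' t) t)
    :
    ∀ t ≥ t₀,
      Real.sqrt (‖xt' t‖ ^ 2 + ‖lt' t‖ ^ 2) ≤ (p / t) * Real.sqrt (‖xt t‖ ^ 2 + ‖lt t‖ ^ 2)
      ∧ (p / t) * Real.sqrt (‖xt t‖ ^ 2 + ‖lt t‖ ^ 2)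
          ≤ (p / t) * Real.sqrt (‖xs‖ ^ 2 + ‖ls‖ ^ 2) := by
  -- saddle point conditions at (xs, ls)
  have hsp : ∀ u μ, L xs μ ≤ L xs ls ∧ L xs ls ≤ L u ls := by
    rw [hOm] at hmem; exact hmem
  have hAxs : A xs - b = 0 := by
    have h := (hsp xs (ls + (A xs - b))).1
    rw [hL, hL] at h
    rw [inner_add_left] at h
    have h2 : ⟪A xs - b, A xs - b⟫ ≤ 0 := by linarith
    exact real_inner_self_nonpos.mp h2
  have hgs : f' xs + ContinuousLinearMap.adjoint A ls = 0 := by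
    set g : X → ℝ := fun u => f u + ⟪ls, A u - b⟫ with hgdef
    have hd : HasFDerivAt g
        (InnerProductSpace.toDual ℝ X (f' xs + ContinuousLinearMap.adjoint A ls)) xs := by
      have h1 : HasFDerivAt f (InnerProductSpace.toDual ℝ X (f' xs)) xs := (hf xs).hasFDerivAt
      have h2 : HasFDerivAt (fun u : X => ⟪ls, A u - b⟫)
          (InnerProductSpace.toDual ℝ X (ContinuousLinearMap.adjoint A ls)) xs := by
        have heq : (fun u : X => ⟪ls, A u - b⟫) =
            fun u : X => (InnerProductSpace.toDual ℝ X (ContinuousLinearMap.adjoint A ls)) u - ⟪ls, b⟫ := by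
          funext u
          rw [InnerProductSpace.toDual_apply_apply, ContinuousLinearMap.adjoint_inner_left,
            inner_sub_right]
        rw [heq]
        exact ((InnerProductSpace.toDual ℝ X
          (ContinuousLinearMap.adjoint A ls)).hasFDerivAt).sub_const _
      have h3 := h1.add h2
      have heq2 : g = fun u => f u + ⟪ls, A u - b⟫ := rfl
      rw [heq2]
      simpa [map_add, Pi.add_def] using h3
    have hm : IsLocalMin g xs := by
      apply Filter.Eventually.of_forall
      intro u
      have := (hsp u ls).2
      rw [hL, hL] at this
      simpa [g] using this
    have h0 := hm.hasFDerivAt_eq_zero hd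
    have := congrArg (InnerProductSpace.toDual ℝ X).symm h0
    simpa using this
  have key : ∀ (e₁ e₂ : ℝ) (u₁ u₂ : X) (l₁ l₂ : Y),
      f' u₁ + ContinuousLinearMap.adjoint A l₁ + e₁ • u₁ = 0 →
      f' u₂ + ContinuousLinearMap.adjoint A l₂ + e₂ • u₂ = 0 →
      A u₁ - b - e₁ • l₁ = 0 → A u₂ - b - e₂ • l₂ = 0 →
      e₁ * (⟪u₁, u₁ - u₂⟫ + ⟪l₁, l₁ - l₂⟫) ≤ e₂ * (⟪u₂, u₁ - u₂⟫ + ⟪l₂, l₁ - l₂⟫) := by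
    intro e₁ e₂ u₁ u₂ l₁ l₂ hx1 hx2 hl1 hl2
    have hM : 0 ≤ ⟪f' u₁ - f' u₂, u₁ - u₂⟫ := grad_mono hf hconv u₁ u₂
    rw [inner_sub_left] at hM
    have h1 : ⟪f' u₁, u₁ - u₂⟫ + ⟪l₁, A (u₁ - u₂)⟫ + e₁ * ⟪u₁, u₁ - u₂⟫ = 0 := by
      have h : ⟪f' u₁ + ContinuousLinearMap.adjoint A l₁ + e₁ • u₁, u₁ - u₂⟫ = (0:ℝ) := by
        rw [hx1, inner_zero_left]
      rwa [inner_add_left, inner_add_left, real_inner_smul_left,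
        ContinuousLinearMap.adjoint_inner_left] at h
    have h2 : ⟪f' u₂, u₁ - u₂⟫ + ⟪l₂, A (u₁ - u₂)⟫ + e₂ * ⟪u₂, u₁ - u₂⟫ = 0 := by
      have h : ⟪f' u₂ + ContinuousLinearMap.adjoint A l₂ + e₂ • u₂, u₁ - u₂⟫ = (0:ℝ) := by
        rw [hx2, inner_zero_left]
      rwa [inner_add_left, inner_add_left, real_inner_smul_left,
        ContinuousLinearMap.adjoint_inner_left] at h
    have h3 : ⟪A u₁, l₁ - l₂⟫ - ⟪b, l₁ - l₂⟫ - e₁ * ⟪l₁, l₁ - l₂⟫ = 0 := by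
      have h : ⟪A u₁ - b - e₁ • l₁, l₁ - l₂⟫ = (0:ℝ) := by rw [hl1, inner_zero_left]
      rwa [inner_sub_left, inner_sub_left, real_inner_smul_left] at h
    have h4 : ⟪A u₂, l₁ - l₂⟫ - ⟪b, l₁ - l₂⟫ - e₂ * ⟪l₂, l₁ - l₂⟫ = 0 := by
      have h : ⟪A u₂ - b - e₂ • l₂, l₁ - l₂⟫ = (0:ℝ) := by rw [hl2, inner_zero_left]
      rwa [inner_sub_left, inner_sub_left, real_inner_smul_left] at h
    have hcross : ⟪l₁, A (u₁ - u₂)⟫ - ⟪l₂, A (u₁ - u₂)⟫ =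
        ⟪A u₁, l₁ - l₂⟫ - ⟪A u₂, l₁ - l₂⟫ := by
      simp only [map_sub, inner_sub_left, inner_sub_right]
      rw [real_inner_comm (A u₁) l₁, real_inner_comm (A u₂) l₁,
        real_inner_comm (A u₁) l₂, real_inner_comm (A u₂) l₂]
      ring
    rw [mul_add, mul_add]
    linarith
  intro t ht
  have htpos : 0 < t := lt_of_lt_of_le ht₀ ht
  have hεpos : ∀ s : ℝ, 0 < s → 0 < c / s ^ p :=
    fun s hs => div_pos hc (Real.rpow_pos_of_pos hs p)
  have eqx : ∀ s, t₀ ≤ s →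
      f' (xt s) + ContinuousLinearMap.adjoint A (lt s) + (c / s ^ p) • xt s = 0 := by
    intro s hs; have := (hsaddle s hs).1; rwa [hgx] at this
  have eql : ∀ s, t₀ ≤ s → A (xt s) - b - (c / s ^ p) • lt s = 0 := by
    intro s hs; have := (hsaddle s hs).2; rwa [hgl] at this
  set z : ℝ → WithLp 2 (X × Y) := fun s => (WithLp.equiv 2 (X × Y)).symm (xt s, lt s) with hzdef
  set zsp : WithLp 2 (X × Y) := (WithLp.equiv 2 (X × Y)).symm (xs, ls) with hzsdef
  have hznorm : ∀ s, ‖z s‖ = Real.sqrt (‖xt s‖ ^ 2 + ‖lt s‖ ^ 2) := by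
    intro s
    rw [WithLp.prod_norm_eq_of_L2]
    simp [hzdef, WithLp.toLp_fst, WithLp.toLp_snd]
  have hzsnorm : ‖zsp‖ = Real.sqrt (‖xs‖ ^ 2 + ‖ls‖ ^ 2) := by
    rw [WithLp.prod_norm_eq_of_L2]
    simp [hzsdef, WithLp.toLp_fst, WithLp.toLp_snd]
  -- Part 2: ‖z t‖ ≤ ‖zsp‖
  have hzz : ‖z t‖ ≤ ‖zsp‖ := by
    have h := key (c / t ^ p) 0 (xt t) xs (lt t) ls (eqx t ht)
      (by simpa using hgs) (eql t ht) (by simpa using hAxs)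
    rw [zero_mul] at h
    have hε := hεpos t htpos
    have hS : ⟪xt t, xt t - xs⟫ + ⟪lt t, lt t - ls⟫ ≤ 0 := by
      by_contra hcon
      push_neg at hcon
      nlinarith [mul_pos hε hcon]
    have i1 : ⟪xt t, xt t - xs⟫ = ‖xt t‖ ^ 2 - ⟪xt t, xs⟫ := by
      rw [inner_sub_right, real_inner_self_eq_norm_sq]
    have i2 : ⟪lt t, lt t - ls⟫ = ‖lt t‖ ^ 2 - ⟪lt t, ls⟫ := by
      rw [inner_sub_right, real_inner_self_eq_norm_sq]
    have hInner2 : ⟪z t, zsp⟫ = ⟪xt t, xs⟫ + ⟪lt t, ls⟫ := by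
      simp [hzdef, hzsdef, WithLp.prod_inner_apply,
        WithLp.toLp_fst, WithLp.toLp_snd]
    have e1 : ‖z t‖ ^ 2 = ‖xt t‖ ^ 2 + ‖lt t‖ ^ 2 := by
      rw [WithLp.prod_norm_sq_eq_of_L2]
      simp [hzdef, WithLp.toLp_fst, WithLp.toLp_snd]
    have hsq : ‖z t‖ ^ 2 ≤ ⟪z t, zsp⟫ := by
      rw [e1, hInner2]; linarith
    have hCS : ⟪z t, zsp⟫ ≤ ‖z t‖ * ‖zsp‖ := real_inner_le_norm _ _
    by_contra hcon
    push_neg at hcon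
    nlinarith [norm_nonneg (z t), norm_nonneg zsp]
  have part2 : (p / t) * Real.sqrt (‖xt t‖ ^ 2 + ‖lt t‖ ^ 2)
      ≤ (p / t) * Real.sqrt (‖xs‖ ^ 2 + ‖ls‖ ^ 2) := by
    have hpt : 0 ≤ p / t := div_nonneg hp0.le htpos.le
    have h := hzz
    rw [hznorm t, hzsnorm] at h
    exact mul_le_mul_of_nonneg_left h hpt
  -- Part 1
  have keyD : ∀ s, t₀ ≤ s → (c / t ^ p) * ‖z s - z t‖ ^ 2 ≤
      |c / t ^ p - c / s ^ p| * (‖z s‖ * ‖z s - z t‖) := by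
    intro s hs
    have h := key (c / s ^ p) (c / t ^ p) (xt s) (xt t) (lt s) (lt t)
      (eqx s hs) (eqx t ht) (eql s hs) (eql t ht)
    have hin1 : ⟪z s, z s - z t⟫ = ⟪xt s, xt s - xt t⟫ + ⟪lt s, lt s - lt t⟫ := by
      simp [hzdef, WithLp.prod_inner_apply, WithLp.sub_fst, WithLp.sub_snd,
        WithLp.toLp_fst, WithLp.toLp_snd]
    have hin2 : ⟪z t, z s - z t⟫ = ⟪xt t, xt s - xt t⟫ + ⟪lt t, lt s - lt t⟫ := by
      simp [hzdef, WithLp.prod_inner_apply, WithLp.sub_fst, WithLp.sub_snd,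
        WithLp.toLp_fst, WithLp.toLp_snd]
    have hsq : ‖z s - z t‖ ^ 2 = ⟪z s, z s - z t⟫ - ⟪z t, z s - z t⟫ := by
      rw [← inner_sub_left, real_inner_self_eq_norm_sq]
    have h' : (c / s ^ p) * ⟪z s, z s - z t⟫ ≤ (c / t ^ p) * ⟪z t, z s - z t⟫ := by
      rw [hin1, hin2, mul_add, mul_add]
      rw [mul_add, mul_add] at h
      linarith
    have hCS : |⟪z s, z s - z t⟫| ≤ ‖z s‖ * ‖z s - z t‖ := abs_real_inner_le_norm _ _
    have step : (c / t ^ p) * ‖z s - z t‖ ^ 2 ≤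
        (c / t ^ p - c / s ^ p) * ⟪z s, z s - z t⟫ := by
      have e3 : (c / t ^ p) * (⟪z s, z s - z t⟫ - ⟪z t, z s - z t⟫)
          = (c / t ^ p) * ⟪z s, z s - z t⟫ - (c / t ^ p) * ⟪z t, z s - z t⟫ := by ring
      have e4 : (c / t ^ p - c / s ^ p) * ⟪z s, z s - z t⟫
          = (c / t ^ p) * ⟪z s, z s - z t⟫ - (c / s ^ p) * ⟪z s, z s - z t⟫ := by ring
      rw [hsq, e3, e4]
      linarith
    calc (c / t ^ p) * ‖z s - z t‖ ^ 2
        ≤ (c / t ^ p - c / s ^ p) * ⟪z s, z s - z t⟫ := step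
      _ ≤ |(c / t ^ p - c / s ^ p) * ⟪z s, z s - z t⟫| := le_abs_self _
      _ = |c / t ^ p - c / s ^ p| * |⟪z s, z s - z t⟫| := abs_mul _ _
      _ ≤ |c / t ^ p - c / s ^ p| * (‖z s‖ * ‖z s - z t‖) :=
          mul_le_mul_of_nonneg_left hCS (abs_nonneg _)
  -- derivative of z in the ℓ² product space
  have hzd : HasDerivAt z ((WithLp.equiv 2 (X × Y)).symm (xt' t, lt' t)) t := by
    have hpr := (hxt t ht).prodMk (hlt t ht)
    have h := ((WithLp.prodContinuousLinearEquiv 2 ℝ X Y).symm.toContinuousLinearMap.hasFDerivAt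
      (x := ((xt t, lt t) : X × Y))).comp_hasDerivAt t hpr
    simpa [hzdef, Function.comp_def] using h
  have hslope : Tendsto (fun s => ‖slope z t s‖) (𝓝[>] t)
      (𝓝 ‖(WithLp.equiv 2 (X × Y)).symm ((xt' t, lt' t) : X × Y)‖) := by
    have h1 := hasDerivAt_iff_tendsto_slope.mp hzd
    exact (h1.mono_left (nhdsWithin_mono t
      (fun s hs => Set.mem_compl_singleton_iff.mpr (ne_of_gt hs)))).norm
  -- bound function and its limit
  have hε' : HasDerivAt (fun s : ℝ => c / s ^ p)
      ((0 * t ^ p - c * (p * t ^ (p - 1))) / (t ^ p) ^ 2) t :=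
    (hasDerivAt_const t c).div (Real.hasDerivAt_rpow_const (Or.inl htpos.ne'))
      (Real.rpow_pos_of_pos htpos p).ne'
  have T1 : Tendsto (fun s => (c / t ^ p - c / s ^ p) / (s - t)) (𝓝[>] t)
      (𝓝 (c * (p * t ^ (p - 1)) / (t ^ p) ^ 2)) := by
    have h1 := hasDerivAt_iff_tendsto_slope.mp hε'
    have h2 := (h1.mono_left (nhdsWithin_mono t
      (fun s hs => Set.mem_compl_singleton_iff.mpr (ne_of_gt hs)))).neg
    have heq : (fun s => -slope (fun s : ℝ => c / s ^ p) t s) =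
        fun s => (c / t ^ p - c / s ^ p) / (s - t) := by
      funext s; rw [slope_def_field]; ring
    rw [heq] at h2
    convert h2 using 2
    · rfl
    ring
  have T2 : Tendsto (fun s => ‖z s‖) (𝓝[>] t) (𝓝 ‖z t‖) :=
    ((hzd.continuousAt.tendsto.mono_left nhdsWithin_le_nhds).norm)
  have hφ : Tendsto (fun s => ((c / t ^ p - c / s ^ p) / (s - t)) * ((c / t ^ p)⁻¹ * ‖z s‖))
      (𝓝[>] t) (𝓝 ((p / t) * ‖z t‖)) := by
    have h := T1.mul ((tendsto_const_nhds (x := (c / t ^ p)⁻¹)).mul T2)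
    have hid : (c * (p * t ^ (p - 1)) / (t ^ p) ^ 2) * ((c / t ^ p)⁻¹ * ‖z t‖)
        = (p / t) * ‖z t‖ := by
      rw [Real.rpow_sub htpos, Real.rpow_one, inv_div]
      have h1 : (t : ℝ) ^ p ≠ 0 := (Real.rpow_pos_of_pos htpos p).ne'
      field_simp
    rwa [hid] at h
  have hb : ∀ᶠ s in (𝓝[>] t), ‖slope z t s‖ ≤
      ((c / t ^ p - c / s ^ p) / (s - t)) * ((c / t ^ p)⁻¹ * ‖z s‖) := by
    filter_upwards [self_mem_nhdsWithin] with s hs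
    have hst : t < s := hs
    have hs0 : t₀ ≤ s := ht.trans hst.le
    have hεt := hεpos t htpos
    have hεlt : c / s ^ p < c / t ^ p :=
      div_lt_div_of_pos_left hc (Real.rpow_pos_of_pos htpos p)
        (Real.rpow_lt_rpow htpos.le hst hp0)
    have hK := keyD s hs0
    rw [abs_of_nonneg (by linarith : (0:ℝ) ≤ c / t ^ p - c / s ^ p)] at hK
    have hΔ : ‖z s - z t‖ ≤ (c / t ^ p - c / s ^ p) * ‖z s‖ / (c / t ^ p) := by
      rcases eq_or_lt_of_le (norm_nonneg (z s - z t)) with h0 | h0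
      · rw [← h0]
        exact div_nonneg (mul_nonneg (by linarith) (norm_nonneg _)) hεt.le
      · rw [le_div_iff₀ hεt]
        have h1 : (c / t ^ p) * ‖z s - z t‖ * ‖z s - z t‖ ≤
            ((c / t ^ p - c / s ^ p) * ‖z s‖) * ‖z s - z t‖ := by nlinarith [hK]
        have h2 := le_of_mul_le_mul_right h1 h0
        linarith
    have hslopeval : ‖slope z t s‖ = (s - t)⁻¹ * ‖z s - z t‖ := by
      rw [slope_def_module, norm_smul, Real.norm_eq_abs,
        abs_of_pos (inv_pos.mpr (by linarith : (0:ℝ) < s - t))]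
    rw [hslopeval]
    have h3 := mul_le_mul_of_nonneg_left hΔ (le_of_lt (inv_pos.mpr (by linarith : (0:ℝ) < s - t)))
    calc (s - t)⁻¹ * ‖z s - z t‖
        ≤ (s - t)⁻¹ * ((c / t ^ p - c / s ^ p) * ‖z s‖ / (c / t ^ p)) := h3
      _ = ((c / t ^ p - c / s ^ p) / (s - t)) * ((c / t ^ p)⁻¹ * ‖z s‖) := by ring
  have hder := le_of_tendsto_of_tendsto hslope hφ hb
  have hder' : Real.sqrt (‖xt' t‖ ^ 2 + ‖lt' t‖ ^ 2)
      ≤ (p / t) * Real.sqrt (‖xt t‖ ^ 2 + ‖lt t‖ ^ 2) := by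
    have hn : ‖(WithLp.equiv 2 (X × Y)).symm ((xt' t, lt' t) : X × Y)‖
        = Real.sqrt (‖xt' t‖ ^ 2 + ‖lt' t‖ ^ 2) := by
      rw [WithLp.prod_norm_eq_of_L2]
      simp [WithLp.toLp_fst, WithLp.toLp_snd]
    rw [← hn, ← hznorm t]
    exact hder
  exact ⟨hder', part2⟩
end

section
/- Let (x_t, λ_t) be the unique saddle point of L_t for each t ≥ t₀ and assume the curve t ↦ (x_t, λ_t) is differentiable. If c > 0 and 0 < p < 1, then for every t ≥ t₀ the function t ↦ L_t(x_t,λ_t) is differentiable and d/dt [L_t(x_t,λ_t)] = (cp/(2t^{p+1}))(‖λ_t‖² − ‖x_t‖²). -/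
open Real Filter Asymptotics
open scoped RealInnerProductSpace Topology

theorem deriv_of_regularized_lagrangian_along_saddle
    {X Y : Type*} [NormedAddCommGroup X] [InnerProductSpace ℝ X] [CompleteSpace X]
    [NormedAddCommGroup Y] [InnerProductSpace ℝ Y] [CompleteSpace Y]
    (f : X → ℝ) (f' : X → X) (hf : ∀ u, HasGradientAt f (f' u) u)
    (hconv : ConvexOn ℝ Set.univ f)
    (A : X →L[ℝ] Y) (b : Y)
    (L : X → Y → ℝ) (hL : ∀ u lam, L u lam = f u + ⟪lam, A u - b⟫)
    (c p t₀ : ℝ) (hc : 0 < c) (hp0 : 0 < p) (hp1 : p < 1) (ht₀ : 0 < t₀)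
    (Lt : ℝ → X → Y → ℝ)
    (hLt : ∀ t u lam, Lt t u lam = L u lam + (c / (2 * t ^ p)) * (‖u‖ ^ 2 - ‖lam‖ ^ 2))
    (gx : ℝ → X → Y → X)
    (hgx : ∀ t u lam, gx t u lam = f' u + ContinuousLinearMap.adjoint A lam + (c / t ^ p) • u)
    (gl : ℝ → X → Y → Y)
    (hgl : ∀ t u lam, gl t u lam = A u - b - (c / t ^ p) • lam)
    (xt : ℝ → X) (lt : ℝ → Y)
    (hsaddle : ∀ t ≥ t₀, gx t (xt t) (lt t) = 0 ∧ gl t (xt t) (lt t) = 0)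
    (xt' : ℝ → X) (lt' : ℝ → Y)
    (hxt : ∀ t ≥ t₀, HasDerivAt xt (xt' t) t)
    (hlt : ∀ t ≥ t₀, HasDerivAt lt (lt' t) t)
    :
    ∀ t ≥ t₀, HasDerivAt (fun τ => Lt τ (xt τ) (lt τ))
      ((c * p / (2 * t ^ (p+1))) * (‖lt t‖ ^ 2 - ‖xt t‖ ^ 2)) t := by
  intro t ht
  have htpos : 0 < t := lt_of_lt_of_le ht₀ ht
  have htp : (0:ℝ) < t ^ p := Real.rpow_pos_of_pos htpos p
  have hx' := hxt t ht
  have hl' := hlt t ht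
  -- component 1: f ∘ xt
  have h1 : HasDerivAt (fun τ => f (xt τ)) ⟪f' (xt t), xt' t⟫ t := by
    have := ((hf (xt t)).hasFDerivAt).comp_hasDerivAt t hx'
    simpa [Function.comp_def] using this
  -- component: A (xt τ) - b
  have h2 : HasDerivAt (fun τ => A (xt τ) - b) (A (xt' t)) t := by
    have := (A.hasFDerivAt.comp_hasDerivAt t hx').sub_const b
    simpa using this
  -- component 3: inner term
  have h3 : HasDerivAt (fun τ => ⟪lt τ, A (xt τ) - b⟫)
      (⟪lt t, A (xt' t)⟫ + ⟪lt' t, A (xt t) - b⟫) t := hl'.inner ℝ h2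
  -- scalar coefficient
  have hr : HasDerivAt (fun τ : ℝ => τ ^ p) (p * t ^ (p - 1)) t :=
    Real.hasDerivAt_rpow_const (Or.inl htpos.ne')
  have h4 : HasDerivAt (fun τ : ℝ => c / (2 * τ ^ p)) (-(c * p) / (2 * t ^ (p + 1))) t := by
    have h := (hr.inv htp.ne').const_mul (c / 2)
    have hfun : (fun τ : ℝ => c / 2 * (τ ^ p)⁻¹) = fun τ : ℝ => c / (2 * τ ^ p) := by
      funext τ; ring
    simp only [Pi.inv_apply] at h
    rw [hfun] at h
    refine h.congr_deriv ?_
    have e1 : t ^ (p + 1) = t ^ p * t := by rw [Real.rpow_add htpos, Real.rpow_one]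
    have e2 : t ^ (p - 1) = t ^ p / t := by
      rw [Real.rpow_sub htpos, Real.rpow_one]
    rw [e1, e2]
    field_simp
  have h5 : HasDerivAt (fun τ => ‖xt τ‖ ^ 2) (⟪xt t, xt' t⟫ + ⟪xt' t, xt t⟫) t := by
    have := hx'.inner ℝ hx'
    simpa only [real_inner_self_eq_norm_sq] using this
  have h6 : HasDerivAt (fun τ => ‖lt τ‖ ^ 2) (⟪lt t, lt' t⟫ + ⟪lt' t, lt t⟫) t := by
    have := hl'.inner ℝ hl'
    simpa only [real_inner_self_eq_norm_sq] using this
  have h7 := h4.mul (h5.sub h6)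
  have H := (h1.add h3).add h7
  -- identify the function
  have hfun : (fun τ => Lt τ (xt τ) (lt τ)) =
      (fun τ => (f (xt τ) + ⟪lt τ, A (xt τ) - b⟫) +
        c / (2 * τ ^ p) * (‖xt τ‖ ^ 2 - ‖lt τ‖ ^ 2)) := by
    funext τ; rw [hLt, hL]
  rw [hfun]
  refine H.congr_deriv ?_
  simp only [Pi.sub_apply]
  -- saddle point equations
  obtain ⟨e1, e2⟩ := hsaddle t ht
  rw [hgx] at e1
  rw [hgl] at e2
  have eqx : f' (xt t) = -(ContinuousLinearMap.adjoint A (lt t)) - (c / t ^ p) • xt t := by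
    have := e1
    abel_nf at this ⊢
    linear_combination (norm := module) this
  have eqA : A (xt t) - b = (c / t ^ p) • lt t := by
    have := sub_eq_zero.mp e2
    exact this
  rw [eqx, eqA]
  rw [inner_sub_left, inner_neg_left, ContinuousLinearMap.adjoint_inner_left,
    real_inner_smul_left, real_inner_smul_right]
  have hcomm : ⟪lt' t, lt t⟫ = ⟪lt t, lt' t⟫ := real_inner_comm _ _
  have hcomm2 : ⟪xt' t, xt t⟫ = ⟪xt t, xt' t⟫ := real_inner_comm _ _
  rw [hcomm, hcomm2]
  have e3 : t ^ (p + 1) = t ^ p * t := by rw [Real.rpow_add htpos, Real.rpow_one]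
  rw [e3]
  field_simp
  ring
end

section
/- Let (x,λ) be a global solution of the dynamical system and let (x_t,λ_t) be the unique saddle point of L_t, with t ↦ (x_t,λ_t) differentiable with derivative (ẋ_t, λ̇_t). Set a(t) = m(t)t^{q+s} − 2γq m(t)t^{q−1} − γṁ(t)t^q + γ. Then for every t ≥ t₀ with t^{q+s} − γq t^{q−1} ≥ 0, d/dt[(1/2)‖λ(t) − λ_t‖²] ≤ (c(α−1)/2)(γq t^{q−p−1} − t^{q+s−p})‖λ(t)−λ_t‖² + a(t)t^q ⟨A*(λ(t)−λ_t), ẋ(t)⟩ + (α−1)(t^{q+s} − γq t^{q−1})⟨λ(t)−λ_t, A(x(t)−x_t)⟩ − ⟨λ(t)−λ_t, λ̇_t⟩. -/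
open Real Filter Asymptotics
open scoped RealInnerProductSpace Topology

theorem deriv_of_dual_distance_bound
    {X Y : Type*} [NormedAddCommGroup X] [InnerProductSpace ℝ X] [CompleteSpace X]
    [NormedAddCommGroup Y] [InnerProductSpace ℝ Y] [CompleteSpace Y]
    (f : X → ℝ) (f' : X → X) (hf : ∀ u, HasGradientAt f (f' u) u)
    (hconv : ConvexOn ℝ Set.univ f)
    (A : X →L[ℝ] Y) (b : Y)
    (L : X → Y → ℝ) (hL : ∀ u lam, L u lam = f u + ⟪lam, A u - b⟫)
    (c p t₀ : ℝ) (hc : 0 < c) (hp0 : 0 < p) (hp1 : p < 1) (ht₀ : 0 < t₀)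
    (Lt : ℝ → X → Y → ℝ)
    (hLt : ∀ t u lam, Lt t u lam = L u lam + (c / (2 * t ^ p)) * (‖u‖ ^ 2 - ‖lam‖ ^ 2))
    (gx : ℝ → X → Y → X)
    (hgx : ∀ t u lam, gx t u lam = f' u + ContinuousLinearMap.adjoint A lam + (c / t ^ p) • u)
    (gl : ℝ → X → Y → Y)
    (hgl : ∀ t u lam, gl t u lam = A u - b - (c / t ^ p) • lam)
    (α q γ s : ℝ) (hα : 1 < α) (hq0 : 0 < q) (hq1 : q < 1) (hγ : 0 < γ) (hs : 0 < s)
    (m m' : ℝ → ℝ)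
    (hmpos : ∀ t ≥ t₀, 0 < m t)
    (hmmono : AntitoneOn m (Set.Ici t₀))
    (hmd : ∀ t ≥ t₀, HasDerivAt m (m' t) t)
    (θ : ℝ → ℝ)
    (hθ : ∀ t, θ t = (m t * t ^ (2*q+s) + γ * t ^ q - 2 * m t * γ * q * t ^ (2*q-1)
      - γ * m' t * t ^ (2*q)) / ((α - 1) * (t ^ (q+s) - γ * q * t ^ (q-1))))
    (x : ℝ → X) (lam : ℝ → Y) (x' x'' : ℝ → X) (lam' : ℝ → Y) (gder : ℝ → X)
    (hx : ∀ t ≥ t₀, HasDerivAt x (x' t) t)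
    (hx' : ∀ t ≥ t₀, HasDerivAt x' (x'' t) t)
    (hx''c : ContinuousOn x'' (Set.Ici t₀))
    (hlam : ∀ t ≥ t₀, HasDerivAt lam (lam' t) t)
    (hlamc : ContinuousOn lam' (Set.Ici t₀))
    (hgder : ∀ t ≥ t₀, HasDerivAt (fun τ => gx τ (x τ) (lam τ)) (gder t) t)
    (hode1 : ∀ t ≥ t₀, m t • x'' t + (α / t ^ q) • x' t + γ • gder t
      + t ^ s • gx t (x t) (lam t) = 0)
    (hode2 : ∀ t ≥ t₀, lam' t = ((α - 1) * (t ^ (q+s) - γ * q * t ^ (q-1)))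
      • gl t (x t + θ t • x' t) (lam t))
    (xt : ℝ → X) (lt : ℝ → Y)
    (hsaddle : ∀ t ≥ t₀, gx t (xt t) (lt t) = 0 ∧ gl t (xt t) (lt t) = 0)
    (xt' : ℝ → X) (lt' : ℝ → Y)
    (hxt : ∀ t ≥ t₀, HasDerivAt xt (xt' t) t)
    (hlt : ∀ t ≥ t₀, HasDerivAt lt (lt' t) t)
    (a : ℝ → ℝ)
    (haf : ∀ t, a t = m t * t ^ (q+s) - 2 * γ * q * m t * t ^ (q-1) - γ * m' t * t ^ q + γ)
    :
    ∀ t ≥ t₀, t ^ (q+s) - γ * q * t ^ (q-1) ≥ 0 →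
      ∀ d : ℝ, HasDerivAt (fun τ => (1/2) * ‖lam τ - lt τ‖ ^ 2) d t →
        d ≤ (c * (α - 1) / 2) * (γ * q * t ^ (q-p-1) - t ^ (q+s-p)) * ‖lam t - lt t‖ ^ 2
          + a t * t ^ q * ⟪ContinuousLinearMap.adjoint A (lam t - lt t), x' t⟫
          + (α - 1) * (t ^ (q+s) - γ * q * t ^ (q-1)) * ⟪lam t - lt t, A (x t - xt t)⟫
          - ⟪lam t - lt t, lt' t⟫ := by
  intro t ht hKpos d hd
  have ht' : 0 < t := lt_of_lt_of_le ht₀ ht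
  have hα1 : (0:ℝ) < α - 1 := by linarith
  have htp : (0:ℝ) < t ^ p := Real.rpow_pos_of_pos ht' p
  set e := lam t - lt t with he
  -- Step A : identify d
  have hder : HasDerivAt (fun τ => (1/2 : ℝ) * ‖lam τ - lt τ‖ ^ 2)
      (⟪e, lam' t - lt' t⟫) t := by
    have h1 : HasDerivAt (fun τ => lam τ - lt τ) (lam' t - lt' t) t :=
      (hlam t ht).sub (hlt t ht)
    have h2 := (h1.inner ℝ h1).const_mul (1/2 : ℝ)
    have h3 : (1/2 : ℝ) * (⟪lam t - lt t, lam' t - lt' t⟫ + ⟪lam' t - lt' t, lam t - lt t⟫)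
        = ⟪lam t - lt t, lam' t - lt' t⟫ := by
      rw [real_inner_comm (lam' t - lt' t)]; ring
    rw [h3] at h2
    have h4 : (fun τ => (1/2 : ℝ) * ‖lam τ - lt τ‖ ^ 2)
        = fun τ => (1/2 : ℝ) * ⟪lam τ - lt τ, lam τ - lt τ⟫ := by
      funext τ; rw [real_inner_self_eq_norm_sq]
    rw [h4]; exact h2
  have hdval : d = ⟪e, lam' t - lt' t⟫ := hd.unique hder
  -- rewrite the ODE for lam'
  have hglval : ∀ τ, τ ≥ t₀ → gl τ (x τ + θ τ • x' τ) (lam τ)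
      = A (x τ - xt τ) + θ τ • A (x' τ) - (c / τ ^ p) • (lam τ - lt τ) := by
    intro τ hτ
    have h0 := (hsaddle τ hτ).2
    rw [hgl] at h0
    have hA : A (xt τ) = b + (c / τ ^ p) • lt τ := by
      rwa [sub_sub, sub_eq_zero] at h0
    rw [hgl, map_add, map_smul, map_sub, hA, smul_sub]
    abel
  have hlamval : ∀ τ, τ ≥ t₀ → lam' τ
      = ((α - 1) * (τ ^ (q+s) - γ * q * τ ^ (q-1))) • A (x τ - xt τ)
        + (((α - 1) * (τ ^ (q+s) - γ * q * τ ^ (q-1))) * θ τ) • A (x' τ)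
        - (((α - 1) * (τ ^ (q+s) - γ * q * τ ^ (q-1))) * (c / τ ^ p)) • (lam τ - lt τ) := by
    intro τ hτ
    rw [hode2 τ hτ, hglval τ hτ, smul_sub, smul_add, smul_smul, smul_smul]
  set K := (α - 1) * (t ^ (q+s) - γ * q * t ^ (q-1)) with hKdef
  have hKnn : 0 ≤ K := mul_nonneg (le_of_lt hα1) hKpos
  have hN : a t * t ^ q = m t * t ^ (2*q+s) + γ * t ^ q - 2 * m t * γ * q * t ^ (2*q-1)
      - γ * m' t * t ^ (2*q) := by
    have e1 : t ^ (2*q+s) = t ^ (q+s) * t ^ q := by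
      rw [← Real.rpow_add ht']; ring_nf
    have e2 : t ^ (2*q-1) = t ^ (q-1) * t ^ q := by
      rw [← Real.rpow_add ht']; ring_nf
    have e3 : t ^ (2*q) = t ^ q * t ^ q := by
      rw [← Real.rpow_add ht']; ring_nf
    rw [haf, e1, e2, e3]; ring
  have hinner : ⟪e, lam' t⟫ = K * ⟪e, A (x t - xt t)⟫ + (K * θ t) * ⟪e, A (x' t)⟫
      - (K * (c / t ^ p)) * ‖e‖ ^ 2 := by
    rw [hlamval t ht, ← hKdef, ← he]
    simp only [inner_sub_right, inner_add_right, real_inner_smul_right]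
    rw [real_inner_self_eq_norm_sq]
  -- key identity
  have key : (K * θ t) * ⟪e, A (x' t)⟫ = a t * t ^ q * ⟪e, A (x' t)⟫ := by
    rcases eq_or_ne K 0 with hK0 | hKne
    · -- degenerate case : use a limit argument along 𝓝[>] t
      rw [hK0, zero_mul, zero_mul]
      symm
      have hexpr : (α - 1) * (t ^ (q+s) - γ * q * t ^ (q-1)) = 0 := by
        rw [← hKdef]; exact hK0
      have hKz : t ^ (q+s) = γ * q * t ^ (q-1) := by
        rcases mul_eq_zero.mp hexpr with h | h
        · exfalso; linarith
        · linarith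
      have hγq : γ * q = t ^ (s+1) := by
        have e1 : t ^ (q+s) = t ^ (q-1) * t ^ (s+1) := by
          rw [← Real.rpow_add ht']; ring_nf
        have hpq : (0:ℝ) < t ^ (q-1) := Real.rpow_pos_of_pos ht' _
        have h3 : t ^ (s+1) * t ^ (q-1) = (γ * q) * t ^ (q-1) := by
          rw [mul_comm (t ^ (s+1))]; rw [← e1, hKz]
        exact (mul_right_cancel₀ (ne_of_gt hpq) h3).symm
      have hKτne : ∀ τ, t < τ → τ ^ (q+s) - γ * q * τ ^ (q-1) ≠ 0 := by
        intro τ hτ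
        have hτ' : 0 < τ := lt_trans ht' hτ
        have e1 : τ ^ (q+s) = τ ^ (q-1) * τ ^ (s+1) := by
          rw [← Real.rpow_add hτ']; ring_nf
        have h4 : t ^ (s+1) < τ ^ (s+1) := Real.rpow_lt_rpow ht'.le hτ (by linarith)
        have h5 : 0 < τ ^ (q-1) := Real.rpow_pos_of_pos hτ' _
        rw [e1, hγq]
        have := mul_pos h5 (sub_pos.mpr h4)
        apply ne_of_gt
        nlinarith
      have hlam't : lam' t = 0 := by
        rw [hode2 t ht, hexpr, zero_smul]
      -- continuity facts
      have hrc : ∀ r : ℝ, ContinuousAt (fun τ : ℝ => τ ^ r) t :=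
        fun r => Real.continuousAt_rpow_const t r (Or.inl (ne_of_gt ht'))
      have hKfc : ContinuousAt (fun τ : ℝ => (α - 1) * (τ ^ (q+s) - γ * q * τ ^ (q-1))) t :=
        continuousAt_const.mul ((hrc _).sub (continuousAt_const.mul (hrc _)))
      have hxc : ContinuousAt x t := (hx t ht).continuousAt
      have hxtcont : ContinuousAt xt t := (hxt t ht).continuousAt
      have hlamcont : ContinuousAt lam t := (hlam t ht).continuousAt
      have hltcont : ContinuousAt lt t := (hlt t ht).continuousAt
      have hx'cont : ContinuousAt x' t := (hx' t ht).continuousAt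
      have hmc : ContinuousAt m t := (hmd t ht).continuousAt
      have hAx'c : ContinuousAt (fun τ => A (x' τ)) t :=
        (A.continuous.continuousAt).comp hx'cont
      have hsubIoi : Set.Ioi t ⊆ Set.Ici t₀ := fun τ hτ => le_trans ht (le_of_lt hτ)
      have hlam'tend : Tendsto lam' (𝓝[>] t) (𝓝 (lam' t)) :=
        ((hlamc t ht).tendsto).mono_left (nhdsWithin_mono t hsubIoi)
      -- step 1 : N τ • A (x' τ) → 0
      have h1 : Tendsto (fun τ => (m τ * τ ^ (2*q+s) + γ * τ ^ q
            - 2 * m τ * γ * q * τ ^ (2*q-1) - γ * m' τ * τ ^ (2*q)) • A (x' τ))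
          (𝓝[>] t) (𝓝 0) := by
        have l2 : Tendsto (fun τ => ((α - 1) * (τ ^ (q+s) - γ * q * τ ^ (q-1))) • A (x τ - xt τ))
            (𝓝[>] t) (𝓝 (((α - 1) * (t ^ (q+s) - γ * q * t ^ (q-1))) • A (x t - xt t))) :=
          (hKfc.smul ((A.continuous.continuousAt).comp (hxc.sub hxtcont)
            : ContinuousAt (fun τ => A (x τ - xt τ)) t)).tendsto.mono_left nhdsWithin_le_nhds
        have l3 : Tendsto (fun τ => (((α - 1) * (τ ^ (q+s) - γ * q * τ ^ (q-1))) * (c / τ ^ p))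
              • (lam τ - lt τ))
            (𝓝[>] t) (𝓝 ((((α - 1) * (t ^ (q+s) - γ * q * t ^ (q-1))) * (c / t ^ p))
              • (lam t - lt t))) :=
          ((hKfc.mul (continuousAt_const.div (hrc p) (ne_of_gt htp))).smul
            (hlamcont.sub hltcont)).tendsto.mono_left nhdsWithin_le_nhds
        have hR := (hlam'tend.sub l2).add l3
        have hzero : lam' t - ((α - 1) * (t ^ (q+s) - γ * q * t ^ (q-1))) • A (x t - xt t)
            + (((α - 1) * (t ^ (q+s) - γ * q * t ^ (q-1))) * (c / t ^ p)) • (lam t - lt t)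
            = 0 := by
          rw [hlam't, hexpr, zero_smul, zero_mul, zero_smul]; abel
        rw [hzero] at hR
        refine hR.congr' ?_
        filter_upwards [self_mem_nhdsWithin] with τ hτ
        have hτt₀ : τ ≥ t₀ := hsubIoi hτ
        have hKτ : (α - 1) * (τ ^ (q+s) - γ * q * τ ^ (q-1)) ≠ 0 :=
          mul_ne_zero (ne_of_gt hα1) (hKτne τ hτ)
        have hKθ : ((α - 1) * (τ ^ (q+s) - γ * q * τ ^ (q-1))) * θ τ
            = m τ * τ ^ (2*q+s) + γ * τ ^ q - 2 * m τ * γ * q * τ ^ (2*q-1)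
              - γ * m' τ * τ ^ (2*q) := by
          rw [hθ τ, mul_comm, div_mul_cancel₀ _ hKτ]
        rw [hlamval τ hτt₀, hKθ]
        abel
      -- step 2 : (γ m' τ τ^{2q}) • A (x' τ) converges
      have hCc : ContinuousAt (fun τ : ℝ => m τ * τ ^ (2*q+s) + γ * τ ^ q
          - 2 * m τ * γ * q * τ ^ (2*q-1)) t := by
        exact ((hmc.mul (hrc _)).add (continuousAt_const.mul (hrc _))).sub
          ((((continuousAt_const.mul hmc).mul continuousAt_const).mul
            continuousAt_const).mul (hrc _))
      have h2 : Tendsto (fun τ => (γ * m' τ * τ ^ (2*q)) • A (x' τ)) (𝓝[>] t)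
          (𝓝 ((m t * t ^ (2*q+s) + γ * t ^ q - 2 * m t * γ * q * t ^ (2*q-1)) • A (x' t))) := by
        have hC : Tendsto (fun τ => (m τ * τ ^ (2*q+s) + γ * τ ^ q
              - 2 * m τ * γ * q * τ ^ (2*q-1)) • A (x' τ)) (𝓝[>] t)
            (𝓝 ((m t * t ^ (2*q+s) + γ * t ^ q - 2 * m t * γ * q * t ^ (2*q-1)) • A (x' t))) :=
          (hCc.smul hAx'c).tendsto.mono_left nhdsWithin_le_nhds
        have hsub2 := hC.sub h1
        rw [sub_zero] at hsub2
        refine hsub2.congr (fun τ => ?_)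
        rw [← sub_smul]; congr 1; ring
      -- step 3 : m' τ • A (x' τ) converges
      have hγt : (γ * t ^ (2*q)) ≠ 0 := ne_of_gt (mul_pos hγ (Real.rpow_pos_of_pos ht' _))
      have h3 : Tendsto (fun τ => m' τ • A (x' τ)) (𝓝[>] t)
          (𝓝 (((γ * t ^ (2*q))⁻¹ * (m t * t ^ (2*q+s) + γ * t ^ q
            - 2 * m t * γ * q * t ^ (2*q-1))) • A (x' t))) := by
        have hscale : Tendsto (fun τ : ℝ => (γ * τ ^ (2*q))⁻¹) (𝓝[>] t)
            (𝓝 ((γ * t ^ (2*q))⁻¹)) :=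
          ((continuousAt_const.mul (hrc _)).inv₀ hγt).tendsto.mono_left nhdsWithin_le_nhds
        have h3' := hscale.smul h2
        rw [smul_smul] at h3'
        refine h3'.congr' ?_
        filter_upwards [self_mem_nhdsWithin] with τ hτ
        have hτ' : (0:ℝ) < τ := lt_trans ht' hτ
        have hγτ : γ * τ ^ (2*q) ≠ 0 := ne_of_gt (mul_pos hγ (Real.rpow_pos_of_pos hτ' _))
        rw [smul_smul]
        congr 1
        field_simp
      by_cases hAx : A (x' t) = 0
      · rw [hAx, inner_zero_right, mul_zero]
      · -- extract the limit of m'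
        have hginner : Tendsto (fun τ => ⟪A (x' t), A (x' τ)⟫) (𝓝[>] t)
            (𝓝 (‖A (x' t)‖ ^ 2)) := by
          have := Filter.Tendsto.inner (𝕜 := ℝ)
            (tendsto_const_nhds : Tendsto _ (𝓝[>] t) (𝓝 (A (x' t))))
            (hAx'c.tendsto.mono_left nhdsWithin_le_nhds)
          rwa [real_inner_self_eq_norm_sq] at this
        have hAA : (‖A (x' t)‖ ^ 2 : ℝ) ≠ 0 :=
          pow_ne_zero _ (norm_ne_zero_iff.mpr hAx)
        have hprod : Tendsto (fun τ => m' τ * ⟪A (x' t), A (x' τ)⟫) (𝓝[>] t)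
            (𝓝 (((γ * t ^ (2*q))⁻¹ * (m t * t ^ (2*q+s) + γ * t ^ q
              - 2 * m t * γ * q * t ^ (2*q-1))) * ‖A (x' t)‖ ^ 2)) := by
          have := Filter.Tendsto.inner (𝕜 := ℝ)
            (tendsto_const_nhds : Tendsto _ (𝓝[>] t) (𝓝 (A (x' t)))) h3
          simp_rw [real_inner_smul_right] at this
          rwa [real_inner_self_eq_norm_sq] at this
        have hm'lim : Tendsto m' (𝓝[>] t)
            (𝓝 ((γ * t ^ (2*q))⁻¹ * (m t * t ^ (2*q+s) + γ * t ^ q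
              - 2 * m t * γ * q * t ^ (2*q-1)))) := by
          have hdiv := hprod.div hginner hAA
          rw [mul_div_cancel_right₀ _ hAA] at hdiv
          refine Tendsto.congr' ?_ hdiv
          filter_upwards [hginner.eventually_ne hAA] with τ hg
          exact mul_div_cancel_right₀ _ hg
        have hslope1 : Tendsto (slope m t) (𝓝[>] t) (𝓝 (m' t)) :=
          (hasDerivAt_iff_tendsto_slope.1 (hmd t ht)).mono_left
            (nhdsWithin_mono _ (fun τ hτ => Set.mem_compl_singleton_iff.mpr (ne_of_gt hτ)))
        have hslope2 : Tendsto (slope m t) (𝓝[>] t)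
            (𝓝 ((γ * t ^ (2*q))⁻¹ * (m t * t ^ (2*q+s) + γ * t ^ q
              - 2 * m t * γ * q * t ^ (2*q-1)))) := by
          rw [Metric.tendsto_nhds]
          intro ε hε
          have hev : ∀ᶠ τ in 𝓝[>] t, dist (m' τ)
              ((γ * t ^ (2*q))⁻¹ * (m t * t ^ (2*q+s) + γ * t ^ q
                - 2 * m t * γ * q * t ^ (2*q-1))) < ε :=
            hm'lim (Metric.ball_mem_nhds _ hε)
          rw [Filter.eventually_iff, mem_nhdsGT_iff_exists_Ioo_subset] at hev
          obtain ⟨u, hu, husub⟩ := hev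
          filter_upwards [Ioo_mem_nhdsGT_of_mem (Set.mem_Ico.mpr ⟨le_refl t, hu⟩)] with τ hτ
          obtain ⟨ξ, hξ, hξeq⟩ := exists_hasDerivAt_eq_slope m m' hτ.1
            (fun σ hσ => ((hmd σ (le_trans ht hσ.1)).continuousAt).continuousWithinAt)
            (fun σ hσ => hmd σ (le_trans ht (le_of_lt hσ.1)))
          rw [slope_def_field, ← hξeq]
          exact husub ⟨hξ.1, lt_trans hξ.2 hτ.2⟩
        have hm't : m' t = (γ * t ^ (2*q))⁻¹ * (m t * t ^ (2*q+s) + γ * t ^ q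
            - 2 * m t * γ * q * t ^ (2*q-1)) :=
          tendsto_nhds_unique hslope1 hslope2
        have hNf : m t * t ^ (2*q+s) + γ * t ^ q - 2 * m t * γ * q * t ^ (2*q-1)
            - γ * m' t * t ^ (2*q) = 0 := by
          rw [hm't]
          have h1' : (t:ℝ) ^ (2*q) ≠ 0 := ne_of_gt (Real.rpow_pos_of_pos ht' _)
          field_simp
          ring
        rw [hN, hNf, zero_mul]
    · have hθt : K * θ t = a t * t ^ q := by
        rw [hθ t, ← hKdef, hN, mul_comm, div_mul_cancel₀ _ hKne]
      rw [hθt]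
  -- final assembly
  have exp_e : ⟪e, A (x' t)⟫ = ⟪ContinuousLinearMap.adjoint A e, x' t⟫ :=
    (ContinuousLinearMap.adjoint_inner_left A (x' t) e).symm
  have hfirst : (c * (α - 1) / 2) * (γ * q * t ^ (q-p-1) - t ^ (q+s-p))
      = -(K * (c / t ^ p)) / 2 := by
    have ep1 : t ^ (q+s-p) = t ^ (q+s) / t ^ p := Real.rpow_sub ht' _ _
    have ep2 : t ^ (q-p-1) = t ^ (q-1) / t ^ p := by
      rw [show q-p-1 = q-1-p by ring, Real.rpow_sub ht']
    rw [ep1, ep2, hKdef]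
    field_simp
    ring
  have hnn : 0 ≤ (K * (c / t ^ p)) * ‖e‖ ^ 2 :=
    mul_nonneg (mul_nonneg hKnn (le_of_lt (div_pos hc htp))) (sq_nonneg _)
  rw [hdval, inner_sub_right, hinner, key, exp_e, hfirst]
  linarith
end

section
/- Let (x*,λ*) ∈ Ω be any saddle point of L and let (x_t,λ_t) be the unique saddle point of L_t for t ≥ t₀. Then for every u ∈ X and every t ≥ t₀, L(u,λ*) − L(x*,λ*) ≤ (L_t(u,λ_t) − L_t(x_t,λ_t)) + ‖λ_t − λ*‖·‖Au − b‖ + (c/(2t^p))(‖x*‖² − ‖u‖²). -/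
open Real Filter Asymptotics
open scoped RealInnerProductSpace Topology

theorem lagrangian_gap_bound
    {X Y : Type*} [NormedAddCommGroup X] [InnerProductSpace ℝ X] [CompleteSpace X]
    [NormedAddCommGroup Y] [InnerProductSpace ℝ Y] [CompleteSpace Y]
    (f : X → ℝ) (f' : X → X) (hf : ∀ u, HasGradientAt f (f' u) u)
    (hconv : ConvexOn ℝ Set.univ f)
    (A : X →L[ℝ] Y) (b : Y)
    (L : X → Y → ℝ) (hL : ∀ u lam, L u lam = f u + ⟪lam, A u - b⟫)
    (c p t₀ : ℝ) (hc : 0 < c) (hp0 : 0 < p) (hp1 : p < 1) (ht₀ : 0 < t₀)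
    (Lt : ℝ → X → Y → ℝ)
    (hLt : ∀ t u lam, Lt t u lam = L u lam + (c / (2 * t ^ p)) * (‖u‖ ^ 2 - ‖lam‖ ^ 2))
    (Om : Set (X × Y))
    (hOm : Om = {z : X × Y | ∀ u μ, L z.1 μ ≤ L z.1 z.2 ∧ L z.1 z.2 ≤ L u z.2})
    (hOmne : Om.Nonempty)
    (xs : X) (ls : Y) (hmem : (xs, ls) ∈ Om)
    (xt : ℝ → X) (lt : ℝ → Y)
    (hsadLt : ∀ t ≥ t₀, ∀ u μ,
      Lt t (xt t) μ ≤ Lt t (xt t) (lt t) ∧ Lt t (xt t) (lt t) ≤ Lt t u (lt t)) :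
    ∀ u : X, ∀ t ≥ t₀,
      L u ls - L xs ls ≤ (Lt t u (lt t) - Lt t (xt t) (lt t))
        + ‖lt t - ls‖ * ‖A u - b‖ + (c / (2 * t ^ p)) * (‖xs‖ ^ 2 - ‖u‖ ^ 2) := by
  intro u t ht
  rw [hOm] at hmem
  have hx : L xs (lt t) ≤ L xs ls := (hmem u (lt t)).1
  have hs : Lt t (xt t) (lt t) ≤ Lt t xs (lt t) := (hsadLt t ht xs (lt t)).2
  have hcs : ⟪ls - lt t, A u - b⟫ ≤ ‖lt t - ls‖ * ‖A u - b‖ := by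
    calc ⟪ls - lt t, A u - b⟫ ≤ ‖ls - lt t‖ * ‖A u - b‖ := real_inner_le_norm _ _
      _ = ‖lt t - ls‖ * ‖A u - b‖ := by rw [norm_sub_rev]
  rw [inner_sub_left] at hcs
  rw [hLt, hLt] at hs ⊢
  rw [hL u ls, hL xs ls, hL u (lt t), hL xs (lt t)] at *
  linarith
end

section
/- Let 0 < r < 1, M > 0, β ∈ ℝ, k₂ > 0, t₀ > 0, and let m : [t₀,∞) → (0,∞) be differentiable with t|ṁ(t)| ≤ k₂ m(t) for all t ≥ t₀. Then there exist constants N ≥ 0, C > 0 and T ≥ t₀ such that for all t ≥ T, ∫_{t₀}^{t} m(ω) ω^{β} e^{(M/(1−r)) ω^{1−r}} dω ≤ N + C · m(t) · t^{β+r} · e^{(M/(1−r)) t^{1−r}}. -/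
set_option maxHeartbeats 1000000


open Real Filter Asymptotics
open scoped RealInnerProductSpace Topology

theorem integral_growth_estimate
    (r M β k₂ t₀ : ℝ) (hr0 : 0 < r) (hr1 : r < 1) (hM : 0 < M)
    (hk₂ : 0 < k₂) (ht₀ : 0 < t₀)
    (m m' : ℝ → ℝ)
    (hmpos : ∀ t ≥ t₀, 0 < m t)
    (hmc : ContinuousOn m (Set.Ici t₀))
    (hmd : ∀ t ≥ t₀, HasDerivAt m (m' t) t)
    (hmb : ∀ t ≥ t₀, t * |m' t| ≤ k₂ * m t) :
    ∃ N ≥ (0:ℝ), ∃ C > (0:ℝ), ∃ T ≥ t₀, ∀ t ≥ T,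
      (∫ ω in t₀..t, m ω * ω ^ β * Real.exp ((M / (1 - r)) * ω ^ (1 - r)))
        ≤ N + C * m t * t ^ (β + r) * Real.exp ((M / (1 - r)) * t ^ (1 - r)) := by
  have h1r : (0:ℝ) < 1 - r := by linarith
  set c : ℝ := M / (1 - r) with hc
  set f : ℝ → ℝ := fun ω => m ω * ω ^ β * Real.exp (c * ω ^ (1 - r)) with hfdef
  set C : ℝ := 2 / M with hCdef
  have hCpos : 0 < C := by positivity
  have hCM : C * M = 2 := by
    rw [hCdef]; field_simp
  set A : ℝ := C * (k₂ + |β + r|) with hAdef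
  have hApos : 0 < A := by
    have : 0 < k₂ + |β + r| := by positivity
    positivity
  set T : ℝ := max t₀ (A ^ ((1:ℝ)/(1-r))) with hTdef
  have hTt₀ : t₀ ≤ T := le_max_left _ _
  have hTpos : 0 < T := lt_of_lt_of_le ht₀ hTt₀
  -- continuity of f on Ici t₀
  have hfc : ContinuousOn f (Set.Ici t₀) := by
    apply ContinuousOn.mul
    · apply hmc.mul
      exact continuousOn_id.rpow_const (fun x hx => Or.inl (ne_of_gt (lt_of_lt_of_le ht₀ hx)))
    · apply Real.continuous_exp.comp_continuousOn
      exact continuousOn_const.mul (continuousOn_id.rpow_const (fun _ _ => Or.inr h1r.le))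
  have hfnonneg : ∀ x, t₀ ≤ x → 0 ≤ f x := by
    intro x hx
    have hx0 : 0 < x := lt_of_lt_of_le ht₀ hx
    have := (hmpos x hx).le
    have := Real.rpow_nonneg hx0.le β
    positivity
  have hsub : ∀ a b : ℝ, t₀ ≤ a → t₀ ≤ b → Set.uIcc a b ⊆ Set.Ici t₀ := by
    intro a b ha hb x hx
    rcases le_total a b with h | h
    · rw [Set.uIcc_of_le h] at hx; exact le_trans ha hx.1
    · rw [Set.uIcc_of_ge h] at hx; exact le_trans hb hx.1
  have hint : ∀ a b : ℝ, t₀ ≤ a → t₀ ≤ b → IntervalIntegrable f MeasureTheory.volume a b := by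
    intro a b ha hb
    exact (hfc.mono (hsub a b ha hb)).intervalIntegrable
  -- the comparison function and its derivative
  have hG : ∀ x, t₀ ≤ x →
      HasDerivAt (fun y => C * (m y * y ^ (β + r) * Real.exp (c * y ^ (1 - r))))
        (C * ((m' x * x ^ (β + r) + m x * ((β + r) * x ^ (β + r - 1))) *
            Real.exp (c * x ^ (1 - r)) +
          m x * x ^ (β + r) *
            (Real.exp (c * x ^ (1 - r)) * (c * ((1 - r) * x ^ (1 - r - 1)))))) x := by
    intro x hx
    have hx0 : x ≠ 0 := ne_of_gt (lt_of_lt_of_le ht₀ hx)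
    have h1 : HasDerivAt (fun y : ℝ => y ^ (β + r)) ((β + r) * x ^ (β + r - 1)) x :=
      Real.hasDerivAt_rpow_const (Or.inl hx0)
    have h2 : HasDerivAt (fun y : ℝ => y ^ (1 - r)) ((1 - r) * x ^ (1 - r - 1)) x :=
      Real.hasDerivAt_rpow_const (Or.inl hx0)
    have h3 := (h2.const_mul c).exp
    exact (((hmd x hx).mul h1).mul h3).const_mul C
  -- key pointwise inequality for x ≥ T
  have hkey : ∀ x, T ≤ x →
      f x ≤ C * ((m' x * x ^ (β + r) + m x * ((β + r) * x ^ (β + r - 1))) *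
            Real.exp (c * x ^ (1 - r)) +
          m x * x ^ (β + r) *
            (Real.exp (c * x ^ (1 - r)) * (c * ((1 - r) * x ^ (1 - r - 1))))) := by
    intro x hxT
    have hxt₀ : t₀ ≤ x := le_trans hTt₀ hxT
    have hx0 : 0 < x := lt_of_lt_of_le ht₀ hxt₀
    set E : ℝ := Real.exp (c * x ^ (1 - r)) with hE
    have hEpos : 0 < E := Real.exp_pos _
    set B : ℝ := x ^ β with hB
    have hBpos : 0 < B := Real.rpow_pos_of_pos hx0 β
    set P : ℝ := x ^ (r - 1) with hP
    have hPpos : 0 < P := Real.rpow_pos_of_pos hx0 _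
    have hmx : 0 < m x := hmpos x hxt₀
    have e4 : x ^ r = x * P := by
      have h5 : x ^ ((1:ℝ) + (r - 1)) = x ^ (1:ℝ) * x ^ (r - 1) := Real.rpow_add hx0 1 (r - 1)
      rw [Real.rpow_one] at h5
      rw [hP, ← h5]
      congr 1; ring
    have e1 : x ^ (β + r) = B * (x * P) := by
      rw [Real.rpow_add hx0 β r, e4, hB]
    have e2 : x ^ (β + r - 1) = B * P := by
      have h5 : x ^ (β + (r - 1)) = x ^ β * x ^ (r - 1) := Real.rpow_add hx0 β (r - 1)
      rw [hB, hP, ← h5]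
      congr 1; ring
    have e3 : x ^ (β + r) * x ^ (1 - r - 1) = B := by
      rw [← Real.rpow_add hx0, hB]
      congr 1; ring
    have hc1r : c * (1 - r) = M := by
      rw [hc]; field_simp
    -- bound on A * P
    have hAx : A ≤ x ^ (1 - r) := by
      have hx1 : A ^ ((1:ℝ)/(1-r)) ≤ x := le_trans (le_max_right _ _) hxT
      have h0 : (0:ℝ) ≤ A ^ ((1:ℝ)/(1-r)) := (Real.rpow_pos_of_pos hApos _).le
      calc A = (A ^ ((1:ℝ)/(1-r))) ^ (1 - r) := by
                rw [← Real.rpow_mul hApos.le, one_div_mul_cancel (ne_of_gt h1r),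
                  Real.rpow_one]
        _ ≤ x ^ (1 - r) := Real.rpow_le_rpow h0 hx1 h1r.le
    have hAP : A * P ≤ 1 := by
      have hPe : P = (x ^ (1 - r))⁻¹ := by
        rw [hP, ← Real.rpow_neg hx0.le]
        congr 1; ring
      have hxr : 0 < x ^ (1 - r) := Real.rpow_pos_of_pos hx0 _
      rw [hPe]
      calc A * (x ^ (1 - r))⁻¹ ≤ x ^ (1 - r) * (x ^ (1 - r))⁻¹ :=
            mul_le_mul_of_nonneg_right hAx (inv_nonneg.mpr hxr.le)
        _ = 1 := mul_inv_cancel₀ (ne_of_gt hxr)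
    -- bound on m'
    have hb := hmb x hxt₀
    have hm'1 : -(k₂ * m x) ≤ m' x * x := by
      have h5 : -|m' x| ≤ m' x := neg_abs_le _
      nlinarith [abs_nonneg (m' x)]
    -- rewrite the RHS
    have hR : C * ((m' x * x ^ (β + r) + m x * ((β + r) * x ^ (β + r - 1))) * E +
          m x * x ^ (β + r) * (E * (c * ((1 - r) * x ^ (1 - r - 1)))))
        = E * B * (C * (m' x * x * P) + C * ((β + r) * (m x * P)) + 2 * m x) := by
      have h6 : m x * x ^ (β + r) * (E * (c * ((1 - r) * x ^ (1 - r - 1))))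
          = m x * E * (c * (1 - r)) * (x ^ (β + r) * x ^ (1 - r - 1)) := by ring
      rw [h6, hc1r, e3, e1, e2]
      linear_combination (m x * E * B) * hCM
    have hL : f x = E * B * m x := by
      simp only [hfdef]; ring
    rw [hL, hR]
    apply mul_le_mul_of_nonneg_left _ (by positivity)
    -- need : m x ≤ C * (m' x * x * P) + C * ((β + r) * (m x * P)) + 2 * m x
    have h8 : -(C * (k₂ * m x) * P) ≤ C * (m' x * x * P) := by
      have := mul_le_mul_of_nonneg_right hm'1 hPpos.le
      nlinarith
    have h9 : -(C * |β + r| * (m x * P)) ≤ C * ((β + r) * (m x * P)) := by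
      have h10 : -|β + r| ≤ β + r := neg_abs_le _
      nlinarith [mul_le_mul_of_nonneg_left
        (mul_le_mul_of_nonneg_right h10 (mul_pos hmx hPpos).le) hCpos.le]
    have h11 : A * P * m x ≤ m x := by
      nlinarith
    rw [hAdef] at h11
    nlinarith
  -- monotonicity argument
  refine ⟨∫ ω in t₀..T, f ω, ?_, C, hCpos, T, hTt₀, ?_⟩
  · exact intervalIntegral.integral_nonneg hTt₀ (fun x hx => hfnonneg x hx.1)
  · intro t htT
    have ht₀t : t₀ ≤ t := le_trans hTt₀ htT
    set g : ℝ → ℝ := fun y =>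
      C * (m y * y ^ (β + r) * Real.exp (c * y ^ (1 - r))) - ∫ ω in T..y, f ω with hgdef
    have huIcc : Set.uIcc T t = Set.Icc T t := Set.uIcc_of_le htT
    have hIccsub : Set.Icc T t ⊆ Set.Ici t₀ := fun x hx => le_trans hTt₀ hx.1
    have hder : ∀ x ∈ Set.Ioo T t, HasDerivAt g
        (C * ((m' x * x ^ (β + r) + m x * ((β + r) * x ^ (β + r - 1))) *
            Real.exp (c * x ^ (1 - r)) +
          m x * x ^ (β + r) *
            (Real.exp (c * x ^ (1 - r)) * (c * ((1 - r) * x ^ (1 - r - 1))))) - f x) x := by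
      intro x hx
      have hxt₀ : t₀ < x := lt_of_le_of_lt hTt₀ hx.1
      have h1 : HasDerivAt (fun y => ∫ ω in T..y, f ω) (f x) x := by
        apply intervalIntegral.integral_hasDerivAt_right (hint T x hTt₀ hxt₀.le)
        · exact ContinuousOn.stronglyMeasurableAtFilter isOpen_Ioi
            (hfc.mono Set.Ioi_subset_Ici_self) x hxt₀
        · exact (hfc.continuousAt (Ici_mem_nhds hxt₀))
      exact (hG x hxt₀.le).sub h1
    have hmono : MonotoneOn g (Set.Icc T t) := by
      apply monotoneOn_of_deriv_nonneg (convex_Icc T t)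
      · apply ContinuousOn.sub
        · apply continuousOn_const.mul
          apply ContinuousOn.mul
          · apply (hmc.mono hIccsub).mul
            apply continuousOn_id.rpow_const
            intro x hx
            exact Or.inl (ne_of_gt (lt_of_lt_of_le ht₀ (hIccsub hx)))
          · apply Real.continuous_exp.comp_continuousOn
            exact continuousOn_const.mul
              (continuousOn_id.rpow_const (fun _ _ => Or.inr h1r.le))
        · have hio : MeasureTheory.IntegrableOn f (Set.uIcc T t) MeasureTheory.volume :=
            (hfc.mono (hsub T t hTt₀ ht₀t)).integrableOn_uIcc
          exact (intervalIntegral.continuousOn_primitive_interval hio).mono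
            (by rw [huIcc])
      · rw [interior_Icc]
        intro x hx
        exact ((hder x hx).differentiableAt).differentiableWithinAt
      · rw [interior_Icc]
        intro x hx
        rw [(hder x hx).deriv]
        exact sub_nonneg.mpr (hkey x hx.1.le)
    have hTm : g T ≤ g t :=
      hmono (Set.left_mem_Icc.mpr htT) (Set.right_mem_Icc.mpr htT) htT
    have hgT : 0 ≤ g T := by
      rw [hgdef]
      simp only [intervalIntegral.integral_same, sub_zero]
      have h1 : 0 < m T := hmpos T hTt₀
      have h2 : 0 < (T:ℝ) ^ (β + r) := Real.rpow_pos_of_pos hTpos _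
      positivity
    have hsplit : (∫ ω in t₀..T, f ω) + (∫ ω in T..t, f ω) = ∫ ω in t₀..t, f ω :=
      intervalIntegral.integral_add_adjacent_intervals (hint t₀ T le_rfl hTt₀)
        (hint T t hTt₀ ht₀t)
    have hfin : (∫ ω in T..t, f ω) ≤ C * (m t * t ^ (β + r) * Real.exp (c * t ^ (1 - r))) := by
      have h1 := le_trans hgT hTm
      simp only [hgdef] at h1
      linarith [h1]
    have hgoal : (∫ ω in t₀..t, f ω) ≤ (∫ ω in t₀..T, f ω) +
        C * m t * t ^ (β + r) * Real.exp (c * t ^ (1 - r)) := by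
      rw [← hsplit]
      have : C * m t * t ^ (β + r) * Real.exp (c * t ^ (1 - r))
          = C * (m t * t ^ (β + r) * Real.exp (c * t ^ (1 - r))) := by ring
      rw [this]
      linarith [hfin]
    exact hgoal
end

section
/- Let 0 ≤ r < 1, M > 0, β ∈ ℝ, C₀ ≥ 0, k₂ > 0, and T ≥ t₀ > 0. Let m : [t₀,∞) → (0,∞) be differentiable and nonincreasing with t|ṁ(t)| ≤ k₂ m(t) for all t ≥ t₀, and let E : [t₀,∞) → [0,∞) be differentiable and satisfy E'(t) + (M/t^r) E(t) ≤ C₀ m(t) t^{β} for all t ≥ T. Then E(t) = O(m(t) t^{β+r}) as t → +∞; that is, there exist C > 0 and T' ≥ T such that E(t) ≤ C m(t) t^{β+r} for all t ≥ T'. -/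
open Real Filter Asymptotics
open scoped RealInnerProductSpace Topology

theorem gronwall_type_big_O_estimate
    (r M β C₀ k₂ t₀ T : ℝ) (hr0 : 0 ≤ r) (hr1 : r < 1) (hM : 0 < M)
    (hC₀ : 0 ≤ C₀) (hk₂ : 0 < k₂) (ht₀ : 0 < t₀) (hT : t₀ ≤ T)
    (m m' E E' : ℝ → ℝ)
    (hmpos : ∀ t ≥ t₀, 0 < m t)
    (hmmono : AntitoneOn m (Set.Ici t₀))
    (hmd : ∀ t ≥ t₀, HasDerivAt m (m' t) t)
    (hmb : ∀ t ≥ t₀, t * |m' t| ≤ k₂ * m t)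
    (hEnn : ∀ t ≥ t₀, 0 ≤ E t)
    (hEd : ∀ t ≥ t₀, HasDerivAt E (E' t) t)
    (hineq : ∀ t ≥ T, E' t + (M / t ^ r) * E t ≤ C₀ * m t * t ^ β) :
    ∃ C > (0:ℝ), ∃ T' ≥ T, ∀ t ≥ T', E t ≤ C * m t * t ^ (β + r) := by
  have hr1' : (0:ℝ) < 1 - r := by linarith
  have ha : 0 < k₂ + |β + r| := by positivity
  obtain ⟨X, hX_def⟩ : ∃ X : ℝ, X = (2 * (k₂ + |β + r|) / M) ^ ((1:ℝ) / (1 - r)) := ⟨_, rfl⟩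
  have hXpos : 0 < X := hX_def ▸ Real.rpow_pos_of_pos (by positivity) _
  obtain ⟨T', hT'_def⟩ : ∃ T' : ℝ, T' = max T (max 1 X) := ⟨_, rfl⟩
  have hT'T : T ≤ T' := hT'_def ▸ le_max_left _ _
  have hT'1 : (1:ℝ) ≤ T' := hT'_def ▸ le_trans (le_max_left _ _) (le_max_right _ _)
  have hT'X : X ≤ T' := hT'_def ▸ le_trans (le_max_right _ _) (le_max_right _ _)
  have hT'pos : 0 < T' := lt_of_lt_of_le one_pos hT'1
  have hT't₀ : t₀ ≤ T' := le_trans hT hT'T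
  -- key exponent bound
  have hq : ∀ t, T' ≤ t → (k₂ + |β + r|) * t ^ (r - 1) ≤ M / 2 := by
    intro t ht
    have htX : X ≤ t := le_trans hT'X ht
    have h1 : t ^ (r - 1) ≤ X ^ (r - 1) :=
      Real.rpow_le_rpow_of_nonpos hXpos htX (by linarith)
    have h2 : X ^ (r - 1) = M / (2 * (k₂ + |β + r|)) := by
      rw [hX_def, ← Real.rpow_mul (by positivity)]
      have he : (1:ℝ) / (1 - r) * (r - 1) = -1 := by
        field_simp
        ring
      rw [he, Real.rpow_neg_one, inv_div]
    have h3 : t ^ (r - 1) ≤ M / (2 * (k₂ + |β + r|)) := h2 ▸ h1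
    rw [le_div_iff₀ (by positivity)] at h3
    nlinarith [abs_nonneg (β + r), Real.rpow_pos_of_pos (lt_of_lt_of_le hT'pos ht) (r - 1)]
  have hmT' : 0 < m T' := hmpos T' hT't₀
  have hTpβ : 0 < T' ^ (β + r) := Real.rpow_pos_of_pos hT'pos _
  obtain ⟨C, hC_def⟩ : ∃ C : ℝ,
      C = max (2 * C₀ / M) (E T' / (m T' * T' ^ (β + r))) + 1 := ⟨_, rfl⟩
  have hCmax : 0 ≤ max (2 * C₀ / M) (E T' / (m T' * T' ^ (β + r))) :=
    le_trans (by positivity) (le_max_left _ _)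
  have hCpos : 0 < C := by rw [hC_def]; linarith
  have hCM : C₀ ≤ C * (M / 2) := by
    have h2 : 2 * C₀ / M ≤ C := by
      rw [hC_def]
      have := le_max_left (2 * C₀ / M) (E T' / (m T' * T' ^ (β + r)))
      linarith
    rw [div_le_iff₀ hM] at h2
    nlinarith
  have hinit : E T' ≤ C * (m T' * T' ^ (β + r)) := by
    have h : E T' / (m T' * T' ^ (β + r)) ≤ C := by
      rw [hC_def]
      have := le_max_right (2 * C₀ / M) (E T' / (m T' * T' ^ (β + r)))
      linarith
    rw [div_le_iff₀ (by positivity)] at h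
    linarith [h]
  -- the comparison function
  set v : ℝ → ℝ := fun t =>
    (E t - C * (m t * t ^ (β + r))) * Real.exp (M / (1 - r) * t ^ (1 - r)) with hv_def
  have hderiv : ∀ t, T' ≤ t → HasDerivAt v
      ((E' t - C * (m' t * t ^ (β + r) + m t * ((β + r) * t ^ (β + r - 1)))) *
          Real.exp (M / (1 - r) * t ^ (1 - r)) +
        (E t - C * (m t * t ^ (β + r))) *
          (Real.exp (M / (1 - r) * t ^ (1 - r)) * (M * t ^ (-r)))) t := by
    intro t ht
    have htpos : 0 < t := lt_of_lt_of_le hT'pos ht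
    have ht₀' : t₀ ≤ t := le_trans hT't₀ ht
    have hne : t ≠ 0 := ne_of_gt htpos
    have hψd : HasDerivAt (fun t => C * (m t * t ^ (β + r)))
        (C * (m' t * t ^ (β + r) + m t * ((β + r) * t ^ (β + r - 1)))) t :=
      ((hmd t ht₀').mul (Real.hasDerivAt_rpow_const (Or.inl hne))).const_mul C
    have hφd : HasDerivAt (fun t => M / (1 - r) * t ^ (1 - r)) (M * t ^ (-r)) t := by
      have h := (Real.hasDerivAt_rpow_const (p := 1 - r) (Or.inl hne)).const_mul (M / (1 - r))
      rw [show (1 - r) - 1 = -r by ring] at h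
      have heq : M / (1 - r) * ((1 - r) * t ^ (-r)) = M * t ^ (-r) := by
        field_simp
      rw [heq] at h
      exact h
    exact ((hEd t ht₀').sub hψd).mul hφd.exp
  have hvle : ∀ t, T' ≤ t →
      (E' t - C * (m' t * t ^ (β + r) + m t * ((β + r) * t ^ (β + r - 1)))) *
          Real.exp (M / (1 - r) * t ^ (1 - r)) +
        (E t - C * (m t * t ^ (β + r))) *
          (Real.exp (M / (1 - r) * t ^ (1 - r)) * (M * t ^ (-r))) ≤ 0 := by
    intro t ht
    have htpos : 0 < t := lt_of_lt_of_le hT'pos ht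
    have ht₀' : t₀ ≤ t := le_trans hT't₀ ht
    have hne : t ≠ 0 := ne_of_gt htpos
    have hmt : 0 < m t := hmpos t ht₀'
    have hp : 0 < t ^ β := Real.rpow_pos_of_pos htpos _
    have hqq : 0 < t ^ (r - 1) := Real.rpow_pos_of_pos htpos _
    have hs : 0 < t ^ (-r) := Real.rpow_pos_of_pos htpos _
    have hexp : 0 < Real.exp (M / (1 - r) * t ^ (1 - r)) := Real.exp_pos _
    have hA := hineq t (le_trans hT'T ht)
    rw [show M / t ^ r = M * t ^ (-r) by
      rw [Real.rpow_neg htpos.le, div_eq_mul_inv]] at hA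
    have h1 : t ^ β * t ^ (r - 1) * t = t ^ (β + r) := by
      rw [← Real.rpow_add htpos, ← Real.rpow_add_one hne]
      congr 1; ring
    have h2 : t ^ (β + r - 1) = t ^ β * t ^ (r - 1) := by
      rw [← Real.rpow_add htpos]
      congr 1; ring
    have h3 : t ^ (β + r) * t ^ (-r) = t ^ β := by
      rw [← Real.rpow_add htpos]
      congr 1; ring
    have hm't : -(m' t) * t ≤ k₂ * m t := by
      have h := hmb t ht₀'
      have h' := neg_abs_le (m' t)
      have h'' := mul_le_mul_of_nonneg_right h' htpos.le
      linarith
    have hqb : (k₂ + |β + r|) * t ^ (r - 1) ≤ M / 2 := hq t ht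
    -- lower bound on ψ' + M t^{-r} ψ
    have b1 : -(k₂ * (m t * (t ^ β * t ^ (r - 1)))) ≤ m' t * t ^ (β + r) := by
      rw [← h1]
      linarith [mul_le_mul_of_nonneg_right hm't
        (show (0:ℝ) ≤ t ^ β * t ^ (r - 1) by positivity)]
    have b2 : -(|β + r| * (m t * (t ^ β * t ^ (r - 1)))) ≤
        m t * ((β + r) * t ^ (β + r - 1)) := by
      rw [h2]
      linarith [mul_le_mul_of_nonneg_right (neg_abs_le (β + r))
        (show (0:ℝ) ≤ m t * (t ^ β * t ^ (r - 1)) by positivity)]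
    have b3 : C * (m t * t ^ (β + r)) * (M * t ^ (-r)) = C * M * (m t * t ^ β) := by
      linear_combination (C * m t * M) * h3
    have c1 := mul_le_mul_of_nonneg_left b1 hCpos.le
    have c2 := mul_le_mul_of_nonneg_left b2 hCpos.le
    have c3 := mul_le_mul_of_nonneg_right hqb
      (show (0:ℝ) ≤ C * (m t * t ^ β) by positivity)
    have c4 := mul_le_mul_of_nonneg_right hCM
      (show (0:ℝ) ≤ m t * t ^ β by positivity)
    have hpsi : C₀ * m t * t ^ β ≤
        C * (m' t * t ^ (β + r) + m t * ((β + r) * t ^ (β + r - 1))) +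
          C * (m t * t ^ (β + r)) * (M * t ^ (-r)) := by
      rw [b3]
      linarith [c1, c2, c3, c4]
    have hinner : E' t - C * (m' t * t ^ (β + r) + m t * ((β + r) * t ^ (β + r - 1))) +
        (E t - C * (m t * t ^ (β + r))) * (M * t ^ (-r)) ≤ 0 := by
      linarith [hA, hpsi]
    have hrw : (E' t - C * (m' t * t ^ (β + r) + m t * ((β + r) * t ^ (β + r - 1)))) *
          Real.exp (M / (1 - r) * t ^ (1 - r)) +
        (E t - C * (m t * t ^ (β + r))) *
          (Real.exp (M / (1 - r) * t ^ (1 - r)) * (M * t ^ (-r))) =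
        (E' t - C * (m' t * t ^ (β + r) + m t * ((β + r) * t ^ (β + r - 1))) +
          (E t - C * (m t * t ^ (β + r))) * (M * t ^ (-r))) *
          Real.exp (M / (1 - r) * t ^ (1 - r)) := by ring
    rw [hrw]
    exact mul_nonpos_of_nonpos_of_nonneg hinner hexp.le
  have hcont : ContinuousOn v (Set.Ici T') := fun t ht =>
    ((hderiv t ht).continuousAt).continuousWithinAt
  have hdiff : DifferentiableOn ℝ v (interior (Set.Ici T')) := by
    rw [interior_Ici]
    exact fun t ht => ((hderiv t ht.le).differentiableAt).differentiableWithinAt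
  have hmono : AntitoneOn v (Set.Ici T') := by
    refine antitoneOn_of_deriv_nonpos (convex_Ici T') hcont hdiff ?_
    rw [interior_Ici]
    intro t ht
    rw [(hderiv t ht.le).deriv]
    exact hvle t ht.le
  refine ⟨C, hCpos, T', hT'T, ?_⟩
  intro t ht
  have h5 : v t ≤ v T' := hmono (Set.self_mem_Ici) (Set.mem_Ici.mpr ht) ht
  have h6 : v T' ≤ 0 :=
    mul_nonpos_of_nonpos_of_nonneg (by linarith) (Real.exp_pos _).le
  have h7 : (E t - C * (m t * t ^ (β + r))) * Real.exp (M / (1 - r) * t ^ (1 - r)) ≤ 0 :=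
    le_trans h5 h6
  have hexp : 0 < Real.exp (M / (1 - r) * t ^ (1 - r)) := Real.exp_pos _
  by_contra hcon
  push_neg at hcon
  have h8 : 0 < E t - C * (m t * t ^ (β + r)) := by linarith
  nlinarith [mul_pos h8 hexp, h7]
end

section
/- Let α > 1, 0 < q < 1, γ > 0, s > 0, M > 0, r = max{q, p−q−s} with 0 < p < 1, and let m : [t₀,∞) → (0,∞) be twice differentiable and nonincreasing such that there exist k₁, k₂ > 0 with γ/t^{q+s} ≤ m(t) ≤ k₁/t^q, t|ṁ(t)| ≤ k₂ m(t), and t²|m̈(t)| ≤ k₂ m(t) for all sufficiently large t. Define a(t) = m(t)t^{q+s} − 2γq m(t)t^{q−1} − γṁ(t)t^q + γ. Then there exist c₁ > 0 and T ≥ t₀ such that for all t ≥ T, ȧ(t)t^q + q a(t) t^{q−1} + (α−1)(γq t^{q−1} − t^{q+s}) + M a(t) t^{q−r} ≤ −c₁ t^{q+s} < 0. -/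
open Real Filter Asymptotics
open scoped RealInnerProductSpace Topology

private lemma key_mul_rpow {t x c u v w : ℝ} (ht0 : 0 < t) (ht1 : 1 ≤ t)
    (hx : x ≤ c * t ^ u) (hc : 0 ≤ c) (huv : u + v ≤ w) : x * t ^ v ≤ c * t ^ w := by
  have hv : (0:ℝ) < t ^ v := Real.rpow_pos_of_pos ht0 v
  calc x * t ^ v ≤ (c * t ^ u) * t ^ v := by nlinarith
    _ = c * t ^ (u + v) := by rw [mul_assoc, ← Real.rpow_add ht0]
    _ ≤ c * t ^ w := by
        exact mul_le_mul_of_nonneg_left (Real.rpow_le_rpow_of_exponent_le ht1 huv) hc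

set_option maxHeartbeats 1000000 in
theorem coefficient_estimate_a
    (α q γ s M p t₀ : ℝ) (hα : 1 < α) (hq0 : 0 < q) (hq1 : q < 1)
    (hγ : 0 < γ) (hs : 0 < s) (hM : 0 < M) (hp0 : 0 < p) (hp1 : p < 1) (ht₀ : 0 < t₀)
    (r : ℝ) (hr : r = max q (p - q - s))
    (m m' m'' : ℝ → ℝ)
    (hmpos : ∀ t ≥ t₀, 0 < m t)
    (hmmono : AntitoneOn m (Set.Ici t₀))
    (hmd : ∀ t ≥ t₀, HasDerivAt m (m' t) t)
    (hmd2 : ∀ t ≥ t₀, HasDerivAt m' (m'' t) t)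
    (k₁ k₂ : ℝ) (hk₁ : 0 < k₁) (hk₂ : 0 < k₂)
    (hbounds : ∀ᶠ t in atTop,
      γ / t ^ (q+s) ≤ m t ∧ m t ≤ k₁ / t ^ q ∧ t * |m' t| ≤ k₂ * m t
        ∧ t ^ 2 * |m'' t| ≤ k₂ * m t)
    (a : ℝ → ℝ)
    (haf : ∀ t, a t = m t * t ^ (q+s) - 2 * γ * q * m t * t ^ (q-1) - γ * m' t * t ^ q + γ) :
    ∃ c₁ > (0:ℝ), ∃ T ≥ t₀, ∀ t ≥ T, ∀ d : ℝ, HasDerivAt a d t →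
      d * t ^ q + q * a t * t ^ (q-1) + (α - 1) * (γ * q * t ^ (q-1) - t ^ (q+s))
          + M * a t * t ^ (q-r) ≤ -c₁ * t ^ (q+s)
        ∧ -c₁ * t ^ (q+s) < 0 := by
  obtain ⟨T₁, hT₁⟩ := eventually_atTop.mp hbounds
  set A₀ : ℝ := k₁ + γ * k₁ * k₂ + γ with hA₀
  set D₀ : ℝ := k₁ * k₂ + (q + s) * k₁ + 2 * γ * q * k₁ * k₂ + 2 * γ * q * (1 - q) * k₁
      + γ * k₁ * k₂ + γ * q * k₁ * k₂ with hD₀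
  set C₀ : ℝ := D₀ + q * A₀ + (α - 1) * γ * q + M * A₀ with hC₀
  have hA₀pos : 0 < A₀ := by positivity
  have hD₀pos : 0 < D₀ := by
    have h1q : 0 < 1 - q := by linarith
    have : 0 < 2 * γ * q * (1 - q) * k₁ := by positivity
    positivity
  have hC₀pos : 0 < C₀ := by
    have hα1 : 0 < α - 1 := by linarith
    positivity
  set K : ℝ := max 1 (2 * C₀ / (α - 1)) with hK
  have hK1 : 1 ≤ K := le_max_left _ _
  have hK2 : 2 * C₀ / (α - 1) ≤ K := le_max_right _ _
  clear_value K
  clear_value A₀ D₀ C₀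
  refine ⟨(α - 1) / 2, by linarith, max (max t₀ T₁) (max 1 (K ^ (1/q))), ?_, ?_⟩
  · exact le_trans (le_max_left _ _) (le_max_left _ _)
  intro t ht d hd
  have htt₀ : t₀ ≤ t := le_trans (le_trans (le_max_left _ _) (le_max_left _ _)) ht
  have htT₁ : T₁ ≤ t := le_trans (le_trans (le_max_right _ _) (le_max_left _ _)) ht
  have ht1 : 1 ≤ t := le_trans (le_trans (le_max_left _ _) (le_max_right _ _)) ht
  have htK : K ^ (1/q) ≤ t := le_trans (le_trans (le_max_right _ _) (le_max_right _ _)) ht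
  have ht0 : 0 < t := lt_of_lt_of_le one_pos ht1
  have hne : t ≠ 0 := ne_of_gt ht0
  obtain ⟨hlow, hub, hm1, hm2⟩ := hT₁ t htT₁
  have hmt : 0 < m t := hmpos t htt₀
  -- t ^ q ≥ K
  have htqK : K ≤ t ^ q := by
    have h0K : (0:ℝ) ≤ K ^ (1/q) := Real.rpow_nonneg (by linarith) _
    have := Real.rpow_le_rpow h0K htK hq0.le
    rwa [← Real.rpow_mul (by linarith : (0:ℝ) ≤ K),
      one_div, inv_mul_cancel₀ (ne_of_gt hq0), Real.rpow_one] at this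
  -- derivative of a
  have hpow1 : HasDerivAt (fun x : ℝ => x ^ (q+s)) ((q+s) * t ^ (q+s-1)) t :=
    Real.hasDerivAt_rpow_const (Or.inl hne)
  have hpow2 : HasDerivAt (fun x : ℝ => x ^ (q-1)) ((q-1) * t ^ (q-1-1)) t :=
    Real.hasDerivAt_rpow_const (Or.inl hne)
  have hpow3 : HasDerivAt (fun x : ℝ => x ^ q) (q * t ^ (q-1)) t :=
    Real.hasDerivAt_rpow_const (Or.inl hne)
  have h1 := (hmd t htt₀).mul hpow1
  have h2 := ((hmd t htt₀).const_mul (2*γ*q)).mul hpow2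
  have h3 := ((hmd2 t htt₀).const_mul γ).mul hpow3
  have hfa := ((h1.sub h2).sub h3).add_const γ
  have haeq : a = fun t => m t * t ^ (q+s) - 2 * γ * q * m t * t ^ (q-1) - γ * m' t * t ^ q + γ :=
    funext haf
  rw [haeq] at hd
  have hdval : d =
      m' t * t ^ (q+s) + m t * ((q+s) * t ^ (q+s-1))
        - (2*γ*q * m' t * t ^ (q-1) + 2*γ*q * m t * ((q-1) * t ^ (q-1-1)))
        - (γ * m'' t * t ^ q + γ * m' t * (q * t ^ (q-1))) :=
    hd.unique hfa
  -- basic bounds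
  have hmub : m t ≤ k₁ * t ^ (-q) := by
    rw [Real.rpow_neg ht0.le, ← div_eq_mul_inv]; exact hub
  have htnegq : (0:ℝ) < t ^ (-q) := Real.rpow_pos_of_pos ht0 _
  have habs' : |m' t| ≤ k₁ * k₂ * t ^ (-q - 1) := by
    rw [show -q - 1 = -q + -1 by ring, Real.rpow_add ht0, Real.rpow_neg_one,
      show k₁ * k₂ * (t ^ (-q) * t⁻¹) = k₁ * k₂ * t ^ (-q) / t by ring,
      le_div_iff₀ ht0]
    calc |m' t| * t = t * |m' t| := mul_comm _ _
      _ ≤ k₂ * m t := hm1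
      _ ≤ k₁ * k₂ * t ^ (-q) := by
          have := mul_le_mul_of_nonneg_left hmub hk₂.le; linarith
  have habs'' : |m'' t| ≤ k₁ * k₂ * t ^ (-q - 2) := by
    have ht2 : t ^ (-2:ℝ) = (t ^ 2)⁻¹ := by
      rw [show (-2:ℝ) = -((2:ℕ):ℝ) by norm_num, Real.rpow_neg ht0.le, Real.rpow_natCast]
    have ht2pos : (0:ℝ) < t ^ 2 := by positivity
    rw [show -q - 2 = -q + -2 by ring, Real.rpow_add ht0, ht2,
      show k₁ * k₂ * (t ^ (-q) * (t ^ 2)⁻¹) = k₁ * k₂ * t ^ (-q) / t ^ 2 by ring,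
      le_div_iff₀ ht2pos]
    calc |m'' t| * t ^ 2 = t ^ 2 * |m'' t| := mul_comm _ _
      _ ≤ k₂ * m t := hm2
      _ ≤ k₁ * k₂ * t ^ (-q) := by
          have := mul_le_mul_of_nonneg_left hmub hk₂.le; linarith
  have hm'ub : m' t ≤ k₁ * k₂ * t ^ (-q - 1) := le_trans (le_abs_self _) habs'
  have hm'lb : -m' t ≤ k₁ * k₂ * t ^ (-q - 1) := le_trans (neg_le_abs _) habs'
  have hm''lb : -m'' t ≤ k₁ * k₂ * t ^ (-q - 2) := le_trans (neg_le_abs _) habs''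
  have hkk : (0:ℝ) ≤ k₁ * k₂ := by positivity
  -- bound for d
  have b1 : m' t * t ^ (q+s) ≤ k₁ * k₂ * t ^ (s-1) :=
    key_mul_rpow ht0 ht1 hm'ub hkk (by linarith)
  have b2h : m t * t ^ (q+s-1) ≤ k₁ * t ^ (s-1) :=
    key_mul_rpow ht0 ht1 hmub hk₁.le (by linarith)
  have b2 : m t * ((q+s) * t ^ (q+s-1)) ≤ (q+s) * k₁ * t ^ (s-1) := by
    have hqs : (0:ℝ) ≤ q + s := by linarith
    have := mul_le_mul_of_nonneg_left b2h hqs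
    linarith
  have b3h : (-m' t) * t ^ (q-1) ≤ k₁ * k₂ * t ^ (s-1) :=
    key_mul_rpow ht0 ht1 hm'lb hkk (by linarith)
  have b3 : -(2*γ*q * m' t * t ^ (q-1)) ≤ 2*γ*q * (k₁ * k₂) * t ^ (s-1) := by
    have := mul_le_mul_of_nonneg_left b3h (show (0:ℝ) ≤ 2*γ*q by positivity)
    linarith
  have b4h : m t * t ^ (q-1-1) ≤ k₁ * t ^ (s-1) :=
    key_mul_rpow ht0 ht1 hmub hk₁.le (by linarith)
  have b4 : -(2*γ*q * m t * ((q-1) * t ^ (q-1-1))) ≤ 2*γ*q*(1-q) * k₁ * t ^ (s-1) := by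
    have := mul_le_mul_of_nonneg_left b4h (show (0:ℝ) ≤ 2*γ*q*(1-q) by
      have : (0:ℝ) < 1 - q := by linarith
      positivity)
    linarith
  have b5h : (-m'' t) * t ^ q ≤ k₁ * k₂ * t ^ (s-1) :=
    key_mul_rpow ht0 ht1 hm''lb hkk (by linarith)
  have b5 : -(γ * m'' t * t ^ q) ≤ γ * (k₁ * k₂) * t ^ (s-1) := by
    have := mul_le_mul_of_nonneg_left b5h hγ.le
    linarith
  have b6 : -(γ * m' t * (q * t ^ (q-1))) ≤ γ * q * (k₁ * k₂) * t ^ (s-1) := by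
    have := mul_le_mul_of_nonneg_left b3h (show (0:ℝ) ≤ γ * q by positivity)
    linarith
  have hdle : d ≤ D₀ * t ^ (s-1) := by
    rw [hdval, hD₀]; linarith
  -- bound for a
  have b7 : m t * t ^ (q+s) ≤ k₁ * t ^ s :=
    key_mul_rpow ht0 ht1 hmub hk₁.le (by linarith)
  have b8 : (0:ℝ) ≤ 2*γ*q * m t * t ^ (q-1) := by positivity
  have b9h : (-m' t) * t ^ q ≤ k₁ * k₂ * t ^ s :=
    key_mul_rpow ht0 ht1 hm'lb hkk (by linarith)
  have b9 : -(γ * m' t * t ^ q) ≤ γ * (k₁ * k₂) * t ^ s := by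
    have := mul_le_mul_of_nonneg_left b9h hγ.le
    linarith
  have b10 : γ ≤ γ * t ^ s := by
    have h := Real.one_le_rpow ht1 hs.le
    have := mul_le_mul_of_nonneg_left h hγ.le
    linarith
  have hale : a t ≤ A₀ * t ^ s := by
    rw [haf t, hA₀]; linarith
  -- assemble
  have c1 : d * t ^ q ≤ D₀ * t ^ s :=
    key_mul_rpow ht0 ht1 hdle hD₀pos.le (by linarith)
  have c2h : a t * t ^ (q-1) ≤ A₀ * t ^ s :=
    key_mul_rpow ht0 ht1 hale hA₀pos.le (by linarith)
  have c2 : q * a t * t ^ (q-1) ≤ q * A₀ * t ^ s := by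
    have := mul_le_mul_of_nonneg_left c2h hq0.le
    linarith
  have c3 : (α - 1) * (γ * q * t ^ (q-1)) ≤ (α-1) * γ * q * t ^ s := by
    have h := Real.rpow_le_rpow_of_exponent_le ht1 (show q - 1 ≤ s by linarith)
    have := mul_le_mul_of_nonneg_left h (show (0:ℝ) ≤ (α-1) * γ * q by
      have : (0:ℝ) < α - 1 := by linarith
      positivity)
    linarith
  have hqr : q ≤ r := hr ▸ le_max_left _ _
  have c4h : a t * t ^ (q-r) ≤ A₀ * t ^ s :=
    key_mul_rpow ht0 ht1 hale hA₀pos.le (by linarith)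
  have c4 : M * a t * t ^ (q-r) ≤ M * A₀ * t ^ s := by
    have := mul_le_mul_of_nonneg_left c4h hM.le
    linarith
  have hαpos : (0:ℝ) < α - 1 := by linarith
  have htq2 : 2 * C₀ / (α - 1) ≤ t ^ q := le_trans hK2 htqK
  have htq3 : 2 * C₀ ≤ (α - 1) * t ^ q := by
    rw [div_le_iff₀ hαpos] at htq2; linarith
  have htspos : (0:ℝ) < t ^ s := Real.rpow_pos_of_pos ht0 _
  have hqspos : (0:ℝ) < t ^ (q+s) := Real.rpow_pos_of_pos ht0 _
  have hcs : C₀ * t ^ s ≤ (α - 1) / 2 * t ^ (q+s) := by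
    rw [Real.rpow_add ht0]
    have := mul_le_mul_of_nonneg_right htq3 htspos.le
    linarith
  constructor
  · rw [hC₀] at hcs
    linarith
  · have := mul_pos (show (0:ℝ) < (α-1)/2 by linarith) hqspos
    linarith
end
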